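/- arXiv:2512.01876 — 9 statements merged into one kernel-verified Lean document; each statement's English description precedes it below -/
import Mathlib

section
/- Let Σ_pk ⊆ ℝ^{n×n}×ℝ^{n×m} be open in the Euclidean topology, let (A_true,B_true) ∈ Σ_pk, and let D be input-state data of length T consistent with (A_true,B_true). Then the following are equivalent: (a) D is Σ_pk-informative for identification; (b) D is M-informative for identification (i.e., Σ_D is a singleton); (c) the (n+m)×T matrix obtained by stacking X_- on top of U_- has rank n+m. -/
open Matrix

/-- A system: a pair `(A, B)` of real matrices of sizes `n × n` and `n × m`. -/
abbrev Sys (n m : ℕ) := Matrix (Fin n) (Fin n) ℝ × Matrix (Fin n) (Fin m) ℝ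

/-- `(A, B)` is consistent with the input-state data `(u, x)` of length `T`. -/
def Consistent {n m T : ℕ} (A : Matrix (Fin n) (Fin n) ℝ) (B : Matrix (Fin n) (Fin m) ℝ)
    (u : Fin T → Fin m → ℝ) (x : Fin (T + 1) → Fin n → ℝ) : Prop :=
  ∀ t : Fin T, x t.succ = A.mulVec (x t.castSucc) + B.mulVec (u t)

/-- The set `Σ_D` of systems consistent with the data `(u, x)`. -/
def SigmaD {n m T : ℕ} (u : Fin T → Fin m → ℝ) (x : Fin (T + 1) → Fin n → ℝ) :
    Set (Sys n m) :=
  {AB | Consistent AB.1 AB.2 u x}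

/-- The matrix `X₋ = [x(0) ⋯ x(T-1)]`. -/
def Xminus {n T : ℕ} (x : Fin (T + 1) → Fin n → ℝ) : Matrix (Fin n) (Fin T) ℝ :=
  Matrix.of fun i t => x t.castSucc i

/-- The matrix `X₊ = [x(1) ⋯ x(T)]`. -/
def Xplus {n T : ℕ} (x : Fin (T + 1) → Fin n → ℝ) : Matrix (Fin n) (Fin T) ℝ :=
  Matrix.of fun i t => x t.succ i

/-- The matrix `U₋ = [u(0) ⋯ u(T-1)]`. -/
def Uminus {m T : ℕ} (u : Fin T → Fin m → ℝ) : Matrix (Fin m) (Fin T) ℝ :=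
  Matrix.of fun i t => u t i

/-- The stacked matrix `[X₋; U₋]`. -/
def stacked {n m T : ℕ} (X : Matrix (Fin n) (Fin T) ℝ) (U : Matrix (Fin m) (Fin T) ℝ) :
    Matrix (Fin n ⊕ Fin m) (Fin T) ℝ :=
  Matrix.fromRows X U

/-- A real square matrix is Schur if all its complex eigenvalues have modulus `< 1`. -/
def Schur {n : ℕ} (M : Matrix (Fin n) (Fin n) ℝ) : Prop :=
  ∀ μ ∈ spectrum ℂ (M.map ((↑·) : ℝ → ℂ)), ‖μ‖ < 1

/-- The matrix `[C  AC  ⋯  A^{n-1}C]`. -/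
def reachMat {n : ℕ} (A : Matrix (Fin n) (Fin n) ℝ) {p : Type*} (C : Matrix (Fin n) p ℝ) :
    Matrix (Fin n) (Fin n × p) ℝ :=
  Matrix.of fun i q => (A ^ (q.1 : ℕ) * C) i q.2

/-- The column span of a matrix, as a submodule. -/
def colSpan {p : Type*} {q : Type*} [Fintype q] (M : Matrix p q ℝ) :
    Submodule ℝ (p → ℝ) :=
  LinearMap.range M.mulVecLin

/-- The reachable subspace `R(A, C)`: the column span of `[C AC ⋯ A^{n-1}C]`. -/
def Rspace {n : ℕ} (A : Matrix (Fin n) (Fin n) ℝ) {p : Type*} [Fintype p]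
    (C : Matrix (Fin n) p ℝ) : Submodule ℝ (Fin n → ℝ) :=
  colSpan (reachMat A C)

/-- `(A, B)` is controllable. -/
def Controllable {n m : ℕ} (A : Matrix (Fin n) (Fin n) ℝ) (B : Matrix (Fin n) (Fin m) ℝ) :
    Prop :=
  (reachMat A B).rank = n

/-- `(A, B)` is stabilizable. -/
def Stabilizable {n m : ℕ} (A : Matrix (Fin n) (Fin n) ℝ) (B : Matrix (Fin n) (Fin m) ℝ) :
    Prop :=
  ∃ K : Matrix (Fin m) (Fin n) ℝ, Schur (A + B * K)

/-- The set `Σ_cont` of controllable systems. -/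
def SigmaCont (n m : ℕ) : Set (Sys n m) := {AB | Controllable AB.1 AB.2}

/-- The set `Σ_stab` of stabilizable systems. -/
def SigmaStab (n m : ℕ) : Set (Sys n m) := {AB | Stabilizable AB.1 AB.2}

/-- Data `(u, x)` is `P`-informative for identification: `Σ_D ∩ P` is a singleton. -/
def InfId {n m T : ℕ} (P : Set (Sys n m)) (u : Fin T → Fin m → ℝ)
    (x : Fin (T + 1) → Fin n → ℝ) : Prop :=
  ∃ s : Sys n m, SigmaD u x ∩ P = {s}

/-- Data `(u, x)` is `P`-informative for stabilization. -/
def InfStab {n m T : ℕ} (P : Set (Sys n m)) (u : Fin T → Fin m → ℝ)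
    (x : Fin (T + 1) → Fin n → ℝ) : Prop :=
  ∃ K : Matrix (Fin m) (Fin n) ℝ, ∀ AB ∈ SigmaD u x ∩ P, Schur (AB.1 + AB.2 * K)

/-- An input is `P`-universal for identification. -/
def UnivId {n m T : ℕ} (P : Set (Sys n m)) (u : Fin T → Fin m → ℝ) : Prop :=
  ∀ AB ∈ P, ∀ x : Fin (T + 1) → Fin n → ℝ, Consistent AB.1 AB.2 u x → InfId P u x

/-- An input is `P`-universal for stabilization. -/
def UnivStab {n m T : ℕ} (P : Set (Sys n m)) (u : Fin T → Fin m → ℝ) : Prop :=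
  ∀ AB ∈ P, ∀ x : Fin (T + 1) → Fin n → ℝ, Consistent AB.1 AB.2 u x → InfStab P u x

/-- The Hankel matrix of depth `k` of the input sequence `u`. -/
def Hankel {m T : ℕ} (u : Fin T → Fin m → ℝ) (k : ℕ) :
    Matrix (Fin k × Fin m) (Fin (T + 1 - k)) ℝ :=
  Matrix.of fun q i =>
    u ⟨i.val + q.1.val, by have h1 := i.isLt; have h2 := q.1.isLt; omega⟩ q.2

/-- The input sequence `u` is persistently exciting of order `k`. -/
def PE {m T : ℕ} (u : Fin T → Fin m → ℝ) (k : ℕ) : Prop :=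
  (Hankel u k).rank = k * m

/-- The matrix `[B  x₀]` obtained by appending the column `x₀` to `B`. -/
def augCol {n m : ℕ} (B : Matrix (Fin n) (Fin m) ℝ) (x0 : Fin n → ℝ) :
    Matrix (Fin n) (Fin m ⊕ Fin 1) ℝ :=
  Matrix.fromCols B (Matrix.of fun i _ => x0 i)

/-- Precomposition with `Sum.inl`, extracting the `ℝ^n`-component of a vector in
`ℝ^n × ℝ^m ≃ (Fin n ⊕ Fin m) → ℝ`. -/
def projN (n m : ℕ) : ((Fin n ⊕ Fin m) → ℝ) →ₗ[ℝ] (Fin n → ℝ) :=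
  LinearMap.funLeft ℝ ℝ Sum.inl

/-!
The systems consistent with the data form the fibre of the linear map
`(A, B) ↦ A X₋ + B U₋` over `X₊`, an affine subspace through `(A_true, B_true)`. An affine
subspace meeting an open set in a single point must be that point, since the line to any other
point of the subspace stays in the open set for a short while; so (a) ⇔ (b). The fibre is a
point iff the map is injective, iff `[A B] ↦ [A B] [X₋; U₋]` is, iff the rows of `[X₋; U₋]` are
linearly independent, i.e. (b) ⇔ (c).
-/

open Topology

theorem Matrix.rank_eq_card_iff_linearIndependent_row {K m n : Type*} [Field K] [Fintype m]
    [Fintype n] (M : Matrix m n K) : M.rank = Fintype.card m ↔ LinearIndependent K M.row := by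
  rw [linearIndependent_iff_card_eq_finrank_span, M.rank_eq_finrank_span_row, Set.finrank, eq_comm]

theorem LinearMap.injective_iff_exists_preimage_eq_singleton {R M N : Type*} [Ring R]
    [AddCommGroup M] [AddCommGroup N] [Module R M] [Module R N] (f : M →ₗ[R] N) (a : M) :
    Function.Injective f ↔ ∃ s, f ⁻¹' {f a} = {s} := by
  refine ⟨fun hf => ⟨a, Set.ext fun b => hf.eq_iff⟩, fun ⟨s, hs⟩ => ?_⟩
  have hmem : ∀ v, f v = 0 → a + v = s := fun v hv => by
    simpa [hv] using hs.subset (show f (a + v) = f a by simp [hv])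
  refine (injective_iff_map_eq_zero f).mpr fun v hv => ?_
  simpa using (hmem v hv).trans (hmem 0 f.map_zero).symm

theorem LinearMap.preimage_singleton_eq_of_inter_isOpen {𝕜 E F : Type*}
    [NontriviallyNormedField 𝕜] [AddCommGroup E] [Module 𝕜 E] [TopologicalSpace E]
    [ContinuousAdd E] [ContinuousSMul 𝕜 E] [AddCommGroup F] [Module 𝕜 F] (f : E →ₗ[𝕜] F) (c : F)
    {P : Set E} (hP : IsOpen P) {s : E} (h : f ⁻¹' {c} ∩ P = {s}) : f ⁻¹' {c} = {s} := by
  obtain ⟨hs, hsP⟩ : s ∈ f ⁻¹' {c} ∩ P := h.symm.subset rfl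
  refine Set.Subset.antisymm (fun b hb => ?_) (h.symm.subset.trans Set.inter_subset_left)
  have hnear : ∀ᶠ t : 𝕜 in 𝓝 0, s + t • (b - s) ∈ P :=
    (Continuous.tendsto (f := fun t : 𝕜 => s + t • (b - s)) (by fun_prop) 0).eventually
      (hP.mem_nhds (by simpa using hsP))
  obtain ⟨t, htP, ht⟩ := ((hnear.filter_mono nhdsWithin_le_nhds).and
    (self_mem_nhdsWithin (s := {0}ᶜ))).exists
  have hline : s + t • (b - s) ∈ f ⁻¹' {c} ∩ P := ⟨by simp_all, htP⟩
  rw [h, Set.mem_singleton_iff, add_eq_left, smul_eq_zero, sub_eq_zero] at hline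
  exact hline.resolve_left ht

def dataMap {n m T : ℕ} (X : Matrix (Fin n) (Fin T) ℝ) (U : Matrix (Fin m) (Fin T) ℝ) :
    Sys n m →ₗ[ℝ] Matrix (Fin n) (Fin T) ℝ where
  toFun s := s.1 * X + s.2 * U
  map_add' s s' := by simp only [Prod.fst_add, Prod.snd_add, Matrix.add_mul]; abel
  map_smul' c s := by simp [smul_add]

theorem dataMap_apply {n m T : ℕ} (X : Matrix (Fin n) (Fin T) ℝ) (U : Matrix (Fin m) (Fin T) ℝ)
    (s : Sys n m) : dataMap X U s = fromCols s.1 s.2 * stacked X U := by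
  rw [stacked, fromCols_mul_fromRows]
  rfl

theorem consistent_iff_dataMap_eq {n m T : ℕ} (A : Matrix (Fin n) (Fin n) ℝ)
    (B : Matrix (Fin n) (Fin m) ℝ) (u : Fin T → Fin m → ℝ) (x : Fin (T + 1) → Fin n → ℝ) :
    Consistent A B u x ↔ dataMap (Xminus x) (Uminus u) (A, B) = Xplus x := by
  simp only [Consistent, dataMap, LinearMap.coe_mk, AddHom.coe_mk, ← Matrix.ext_iff, funext_iff]
  simp [Xminus, Xplus, Uminus, mul_apply, mulVec, dotProduct, eq_comm, forall_comm (α := Fin n)]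

theorem sigmaD_eq_preimage_dataMap {n m T : ℕ} (u : Fin T → Fin m → ℝ)
    (x : Fin (T + 1) → Fin n → ℝ) :
    SigmaD u x = dataMap (Xminus x) (Uminus u) ⁻¹' {Xplus x} :=
  Set.ext fun _ => consistent_iff_dataMap_eq _ _ u x

theorem injective_dataMap_iff {n m T : ℕ} (hn : 0 < n) (X : Matrix (Fin n) (Fin T) ℝ)
    (U : Matrix (Fin m) (Fin T) ℝ) :
    Function.Injective (dataMap X U) ↔ (stacked X U).rank = n + m := by
  have : Nonempty (Fin n) := ⟨⟨0, hn⟩⟩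
  have hfromCols : Function.Bijective fun s : Sys n m => fromCols s.1 s.2 :=
    ⟨fun s s' h => Prod.ext_iff.mpr (fromCols_inj h),
      fun M => ⟨(M.toCols₁, M.toCols₂), fromCols_toCols M⟩⟩
  rw [show ⇑(dataMap X U) = (· * stacked X U) ∘ fun s : Sys n m => fromCols s.1 s.2 from
      funext (dataMap_apply X U), Function.Injective.of_comp_iff' _ hfromCols,
    mul_left_injective_iff_vecMul_injective, vecMul_injective_iff,
    ← rank_eq_card_iff_linearIndependent_row, Fintype.card_sum, Fintype.card_fin, Fintype.card_fin]

theorem stmt_0_general {n m T : ℕ} (hn : 0 < n)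
    (P : Set (Sys n m)) (hP : IsOpen P)
    (Atrue : Matrix (Fin n) (Fin n) ℝ) (Btrue : Matrix (Fin n) (Fin m) ℝ)
    (hpk : (Atrue, Btrue) ∈ P)
    (u : Fin T → Fin m → ℝ) (x : Fin (T + 1) → Fin n → ℝ)
    (hcons : Consistent Atrue Btrue u x) :
    (InfId P u x ↔ (∃ s : Sys n m, SigmaD u x = {s})) ∧
    ((∃ s : Sys n m, SigmaD u x = {s}) ↔ (stacked (Xminus x) (Uminus u)).rank = n + m) := by
  have hfibre : SigmaD u x = dataMap (Xminus x) (Uminus u) ⁻¹'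
      {dataMap (Xminus x) (Uminus u) (Atrue, Btrue)} := by
    rw [sigmaD_eq_preimage_dataMap, (consistent_iff_dataMap_eq Atrue Btrue u x).mp hcons]
  refine ⟨⟨fun ⟨s, hs⟩ => ⟨s, ?_⟩, fun ⟨s, hs⟩ => ⟨s, ?_⟩⟩, ?_⟩
  · rw [sigmaD_eq_preimage_dataMap] at hs ⊢
    exact LinearMap.preimage_singleton_eq_of_inter_isOpen _ _ hP hs
  · have htrue : (Atrue, Btrue) ∈ SigmaD u x := hcons
    rw [hs, Set.mem_singleton_iff] at htrue
    rw [hs, Set.singleton_inter_of_mem (htrue ▸ hpk)]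
  · rw [hfibre, ← LinearMap.injective_iff_exists_preimage_eq_singleton,
      injective_dataMap_iff hn]

/-- For open prior knowledge `Σ_pk` containing the true system,
`Σ_pk`-informativity for identification, `M`-informativity for identification, and
`rank [X₋; U₋] = n + m` are equivalent. -/
theorem stmt_0 {n m T : ℕ} (hn : 0 < n) (hm : 0 < m)
    (P : Set (Sys n m)) (hP : IsOpen P)
    (Atrue : Matrix (Fin n) (Fin n) ℝ) (Btrue : Matrix (Fin n) (Fin m) ℝ)
    (hpk : (Atrue, Btrue) ∈ P)
    (u : Fin T → Fin m → ℝ) (x : Fin (T + 1) → Fin n → ℝ)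
    (hcons : Consistent Atrue Btrue u x) :
    (InfId P u x ↔ (∃ s : Sys n m, SigmaD u x = {s})) ∧
    ((∃ s : Sys n m, SigmaD u x = {s}) ↔ (stacked (Xminus x) (Uminus u)).rank = n + m) :=
  stmt_0_general hn P hP Atrue Btrue hpk u x hcons
end

section
/- Suppose (A_true,B_true) is stabilizable and D is input-state data of length T consistent with (A_true,B_true). Then D is Σ_stab-informative for identification if and only if D is M-informative for identification (i.e., Σ_D is a singleton). -/
open Matrix

/-!
The set `Σ_D` of systems consistent with the data is convex, and `Σ_stab` is open: by Gelfand's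
formula a matrix is Schur iff some power has operator norm `< 1`, an open condition, and
`Σ_stab` is a union over feedback gains `K` of preimages of the Schur matrices under
`(A, B) ↦ A + B K`. So if `Σ_D` contained a system other than the true one, the points of the
segment from the true system towards it that lie close enough to the true system would be
further stabilizable systems in `Σ_D`.
-/

open scoped ENNReal Topology

theorem Convex.eq_singleton_of_inter_isOpen_eq_singleton {E : Type*} [AddCommGroup E]
    [Module ℝ E] [TopologicalSpace E] [IsTopologicalAddGroup E] [ContinuousSMul ℝ E]
    {S U : Set E} {s : E} (hS : Convex ℝ S) (hU : IsOpen U) (h : S ∩ U = {s}) : S = {s} := by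
  have hs : s ∈ S ∩ U := h ▸ rfl
  refine Set.eq_singleton_iff_unique_mem.mpr ⟨hs.1, fun s' hs' => ?_⟩
  have hnear : ∀ᶠ t in 𝓝[>] (0 : ℝ), AffineMap.lineMap s s' t ∈ U ∧ t ∈ Set.Ioo 0 1 := by
    refine Filter.Eventually.and ?_ (Ioo_mem_nhdsGT one_pos)
    refine nhdsWithin_le_nhds (AffineMap.lineMap_continuous.tendsto' 0 s ?_ |>.eventually
      (hU.mem_nhds hs.2))
    simp
  obtain ⟨t, htU, ht⟩ := hnear.exists
  have hst : AffineMap.lineMap s s' t = s := by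
    rw [← Set.mem_singleton_iff, ← h]
    exact ⟨hS.lineMap_mem hs.1 hs' ⟨ht.1.le, ht.2.le⟩, htU⟩
  exact ((AffineMap.lineMap_eq_left_iff.mp hst).resolve_right ht.1.ne').symm

theorem convex_sigmaD {n m T : ℕ} (u : Fin T → Fin m → ℝ) (x : Fin (T + 1) → Fin n → ℝ) :
    Convex ℝ (SigmaD u x) := by
  intro s hs s' hs' a b _ _ hab t
  simp only [Prod.fst_add, Prod.snd_add, Prod.smul_fst, Prod.smul_snd, Matrix.add_mulVec,
    Matrix.smul_mulVec]
  rw [add_add_add_comm, ← smul_add, ← smul_add, ← hs t, ← hs' t, ← add_smul, hab, one_smul]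

section

attribute [local instance] Matrix.linftyOpNormedRing Matrix.linftyOpNormedAlgebra

theorem schur_iff_exists_norm_pow_lt_one {n : ℕ} [NeZero n] (M : Matrix (Fin n) (Fin n) ℝ) :
    Schur M ↔ ∃ k > 0, ‖(M.map ((↑·) : ℝ → ℂ)) ^ k‖ < 1 := by
  set Mc := M.map ((↑·) : ℝ → ℂ)
  constructor
  · intro hM
    have hr : spectralRadius ℂ Mc < 1 := by
      simpa using spectrum.spectralRadius_lt_of_forall_lt (a := Mc) (r := 1)
        fun z hz => by simpa [← coe_nnnorm] using hM z hz
    have := (spectrum.pow_nnnorm_pow_one_div_tendsto_nhds_spectralRadius Mc).eventually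
      (gt_mem_nhds hr)
    obtain ⟨k, hk1, hk⟩ := (this.and (Filter.eventually_gt_atTop 0)).exists
    refine ⟨k, hk, ?_⟩
    by_contra! hcon
    have h1 : (1 : ℝ≥0∞) ≤ ‖Mc ^ k‖₊ := by exact_mod_cast hcon
    exact (ENNReal.one_le_rpow h1 (by positivity)).not_gt hk1
  · rintro ⟨k, hk, hMk⟩ μ hμ
    have hμk : ‖μ‖ ^ k ≤ ‖Mc ^ k‖ := by
      rw [← norm_pow]
      exact spectrum.norm_le_norm_of_mem (spectrum.pow_image_subset _ k ⟨μ, hμ, rfl⟩)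
    exact (pow_lt_one_iff_of_nonneg (norm_nonneg μ) hk.ne').mp (hμk.trans_lt hMk)

theorem isOpen_setOf_schur (n : ℕ) : IsOpen {M : Matrix (Fin n) (Fin n) ℝ | Schur M} := by
  rcases n.eq_zero_or_pos with rfl | hn
  · exact isOpen_discrete _
  have : NeZero n := ⟨hn.ne'⟩
  simp_rw [schur_iff_exists_norm_pow_lt_one, Set.ofPred_exists]
  exact isOpen_iUnion fun k => isOpen_const.inter <| isOpen_lt
    ((continuous_id.matrix_map Complex.continuous_ofReal).pow k).norm continuous_const

end

theorem isOpen_sigmaStab (n m : ℕ) : IsOpen (SigmaStab n m) := by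
  simp_rw [SigmaStab, Stabilizable, Set.ofPred_exists]
  refine isOpen_iUnion fun K => (isOpen_setOf_schur n).preimage ?_
  fun_prop

theorem stmt_1_general {n m T : ℕ}
    (Atrue : Matrix (Fin n) (Fin n) ℝ) (Btrue : Matrix (Fin n) (Fin m) ℝ)
    (hstab : Stabilizable Atrue Btrue)
    (u : Fin T → Fin m → ℝ) (x : Fin (T + 1) → Fin n → ℝ)
    (hcons : Consistent Atrue Btrue u x) :
    InfId (SigmaStab n m) u x ↔ (∃ s : Sys n m, SigmaD u x = {s}) := by
  constructor
  · rintro ⟨s, hs⟩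
    exact ⟨s, (convex_sigmaD u x).eq_singleton_of_inter_isOpen_eq_singleton
      (isOpen_sigmaStab n m) hs⟩
  · rintro ⟨s, hs⟩
    have htrue : (Atrue, Btrue) ∈ SigmaD u x := hcons
    rw [hs, Set.mem_singleton_iff] at htrue
    exact ⟨s, by rw [hs, ← htrue, Set.inter_eq_left, Set.singleton_subset_iff]; exact hstab⟩

/-- If the true system is stabilizable, then the data is
`Σ_stab`-informative for identification iff it is `M`-informative for identification. -/
theorem stmt_1 {n m T : ℕ} (hn : 0 < n) (hm : 0 < m)
    (Atrue : Matrix (Fin n) (Fin n) ℝ) (Btrue : Matrix (Fin n) (Fin m) ℝ)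
    (hstab : Stabilizable Atrue Btrue)
    (u : Fin T → Fin m → ℝ) (x : Fin (T + 1) → Fin n → ℝ)
    (hcons : Consistent Atrue Btrue u x) :
    InfId (SigmaStab n m) u x ↔ (∃ s : Sys n m, SigmaD u x = {s}) :=
  stmt_1_general Atrue Btrue hstab u x hcons
end

section
/- Let (A,B) be controllable and let the inputs u(0),…,u(T−1) be persistently exciting of order n+1. Then for every state sequence x(0),…,x(T) such that (A,B) is consistent with the data D = (u,x), the (n+m)×T matrix obtained by stacking X_- on top of U_- has rank n+m. -/
open Matrix

/-!
Let `(η, ζ)` be a left null vector of `[X₋; U₋]`, i.e. `η ⬝ x(t) + ζ ⬝ u(t) = 0` for all `t < T`,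
and let `χ = ∑ cₖ Xᵏ` be the characteristic polynomial of `A`. Along any trajectory,
`∑ₖ cₖ x(i+k) = χ(A) x(i) + ∑ⱼ χⱼ₊₁(A) B u(i+j)` with `χⱼ = divX^[j] χ`, and `χ(A) = 0` by
Cayley–Hamilton. Pairing with `η` and using the null-vector relation at the times `i+k`, the
row vector `wⱼ = η χⱼ₊₁(A) B + cⱼ ζ` (`j ≤ n`) annihilates every window `(u(i), …, u(i+n))`,
i.e. it is a left null vector of the depth-`n+1` Hankel matrix, so `w = 0` by persistency of
excitation. As `χ` is monic, `wₙ = ζ`, and `χ₁, …, χₙ` are monic of degrees `n-1, …, 0`, so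
`η Aᵈ B = 0` for all `d < n`; controllability then forces `η = 0`.
-/

open Polynomial Finset

theorem Matrix.rank_eq_card_iff_vecMul_eq_zero {K p q : Type*} [Field K] [Fintype p]
    [Fintype q] {M : Matrix p q K} :
    M.rank = Fintype.card p ↔ ∀ v, v ᵥ* M = 0 → v = 0 := by
  rw [rank_eq_finrank_span_row, ← Set.finrank, eq_comm,
    ← linearIndependent_iff_card_eq_finrank_span, ← vecMul_injective_iff,
    ← coe_vecMulLinear, injective_iff_map_eq_zero]
  rfl

namespace Polynomial

variable {R : Type*} [CommRing R]

theorem coeff_iterate_divX (p : R[X]) (k e : ℕ) : (divX^[k] p).coeff e = p.coeff (e + k) := by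
  induction k generalizing p with
  | zero => rfl
  | succ k ih => rw [Function.iterate_succ_apply, ih, coeff_divX, add_assoc]

theorem iterate_divX_eq_zero {p : R[X]} {k : ℕ} (h : p.natDegree < k) : divX^[k] p = 0 := by
  ext e
  rw [coeff_iterate_divX, coeff_zero]
  exact coeff_eq_zero_of_natDegree_lt (by omega)

theorem degree_divX_lt_of_degree_lt {p : R[X]} {N : ℕ} (h : p.degree < ↑(N + 1)) :
    (divX p).degree < N := by
  rw [degree_lt_iff_coeff_zero] at h ⊢
  intro e he
  rw [coeff_divX]
  exact h _ (by omega)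

/-- `divX^[natDegree p - d] p` is `X ^ d` plus lower terms, which gives an induction on `d`. -/
theorem map_X_pow_eq_zero_of_map_iterate_divX {M : Type*} [AddCommGroup M] [Module R M]
    (f : R[X] →ₗ[R] M) {p : R[X]} (hp : p.Monic)
    (hf : ∀ k, 1 ≤ k → k ≤ p.natDegree → f (divX^[k] p) = 0) :
    ∀ d < p.natDegree, f (X ^ d) = 0 := by
  intro d
  induction d using Nat.strong_induction_on with
  | _ d ih =>
    intro hd
    set q := divX^[p.natDegree - d] p
    have hcoeff : ∀ e, q.coeff e = p.coeff (e + (p.natDegree - d)) := coeff_iterate_divX p _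
    have hq : q.natDegree < d + 1 := by
      rw [Nat.lt_succ_iff, natDegree_le_iff_coeff_eq_zero]
      intro e he
      rw [hcoeff]
      exact coeff_eq_zero_of_natDegree_lt (by omega)
    have hfq : f q = ∑ e ∈ range d, q.coeff e • f (X ^ e) + f (X ^ d) := by
      conv_lhs => rw [q.as_sum_range_C_mul_X_pow' hq]
      rw [map_sum, sum_range_succ, hcoeff, Nat.add_sub_cancel' hd.le, hp.coeff_natDegree,
        C_1, one_mul]
      simp only [← smul_eq_C_mul, map_smul]
    have hlow : ∀ e ∈ range d, q.coeff e • f (X ^ e) = 0 := fun e he => by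
      have he := mem_range.1 he
      rw [ih e he (by omega), smul_zero]
    rw [hf _ (by omega) (by omega), sum_eq_zero hlow, zero_add] at hfq
    exact hfq.symm

end Polynomial

section Trajectory

variable {R ι κ : Type*} [CommRing R] [Fintype ι] [DecidableEq ι] [Fintype κ]
  {A : Matrix ι ι R} {B : Matrix ι κ R} {x : ℕ → ι → R} {u : ℕ → κ → R} {T : ℕ}

/-- Writing `p = divX p * X + p(0)` reduces the identity for `p` to the one for `divX p`,
started one step later. -/
theorem sum_coeff_smul_trajectory (hdyn : ∀ t < T, x (t + 1) = A *ᵥ x t + B *ᵥ u t) :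
    ∀ {N : ℕ} {p : R[X]} {i : ℕ}, p.degree < N → i + N ≤ T →
      ∑ k ∈ range N, p.coeff k • x (i + k) =
        aeval A p *ᵥ x i + ∑ j ∈ range N, (aeval A (divX^[j + 1] p) * B) *ᵥ u (i + j)
  | 0, p, i, hp, _ => by
    rw [degree_lt_iff_coeff_zero] at hp
    simp [show p = 0 from ext fun e => hp e (Nat.zero_le e)]
  | N + 1, p, i, hp, hi => by
    have ih := sum_coeff_smul_trajectory hdyn (i := i + 1) (degree_divX_lt_of_degree_lt hp)
      (by omega)
    have hp_eq : aeval A p = aeval A (divX p) * A + p.coeff 0 • 1 := by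
      conv_lhs => rw [← divX_mul_X_add p]
      simp [Algebra.smul_def]
    rw [sum_range_succ', sum_range_succ', hp_eq]
    simp only [coeff_divX, Function.iterate_succ_apply, Function.iterate_zero_apply] at ih ⊢
    simp only [add_zero, ← add_assoc, Nat.add_right_comm i _ 1, ih, hdyn i (by omega),
      mulVec_add, add_mulVec, smul_mulVec, one_mulVec, mulVec_mulVec]
    abel

theorem sum_dotProduct_eq_zero_of_aeval_eq_zero
    (hdyn : ∀ t < T, x (t + 1) = A *ᵥ x t + B *ᵥ u t) {p : R[X]} (hA : aeval A p = 0)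
    {N : ℕ} (hp : p.degree < N) {η : ι → R} {ζ : κ → R}
    (horth : ∀ t < T, η ⬝ᵥ x t + ζ ⬝ᵥ u t = 0) {i : ℕ} (hi : i + N ≤ T) :
    ∑ j ∈ range N,
      (η ᵥ* (aeval A (divX^[j + 1] p) * B) + p.coeff j • ζ) ⬝ᵥ u (i + j) = 0 := by
  have h := congrArg (η ⬝ᵥ ·) (sum_coeff_smul_trajectory hdyn hp hi)
  simp only [hA, zero_mulVec, zero_add, dotProduct_sum, dotProduct_mulVec] at h
  calc _ = ∑ j ∈ range N, p.coeff j • (η ⬝ᵥ x (i + j) + ζ ⬝ᵥ u (i + j)) := by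
        simp only [add_dotProduct, sum_add_distrib, ← h, smul_add, dotProduct_smul,
          smul_dotProduct]
    _ = 0 := sum_eq_zero fun j hj => by
        rw [horth _ (by have := mem_range.1 hj; omega), smul_zero]

end Trajectory

/-! The data are extended by zero to sequences on `ℕ`, so that time shifts are additions. -/

theorem Fin.extend_val_apply {α : Type*} [Zero α] {T : ℕ} (v : Fin T → α) {t : ℕ}
    (ht : t < T) : Function.extend Fin.val v 0 t = v ⟨t, ht⟩ :=
  Fin.val_injective.extend_apply v 0 ⟨t, ht⟩

section Data

variable {n m T : ℕ} {A : Matrix (Fin n) (Fin n) ℝ} {B : Matrix (Fin n) (Fin m) ℝ}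
  {u : Fin T → Fin m → ℝ} {x : Fin (T + 1) → Fin n → ℝ}

theorem Consistent.extend_val (h : Consistent A B u x) (t : ℕ) (ht : t < T) :
    Function.extend Fin.val x 0 (t + 1) =
      A *ᵥ Function.extend Fin.val x 0 t + B *ᵥ Function.extend Fin.val u 0 t := by
  rw [Fin.extend_val_apply x (by omega), Fin.extend_val_apply x (by omega),
    Fin.extend_val_apply u ht]
  exact h ⟨t, ht⟩

theorem dotProduct_extend_val_eq_zero_of_vecMul_stacked_eq_zero {ξ : Fin n ⊕ Fin m → ℝ}
    (hξ : ξ ᵥ* stacked (Xminus x) (Uminus u) = 0) (t : ℕ) (ht : t < T) :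
    (ξ ∘ Sum.inl) ⬝ᵥ Function.extend Fin.val x 0 t +
      (ξ ∘ Sum.inr) ⬝ᵥ Function.extend Fin.val u 0 t = 0 := by
  have h := congrFun hξ ⟨t, ht⟩
  rw [stacked, vecMul_fromRows] at h
  rw [Fin.extend_val_apply x (by omega), Fin.extend_val_apply u ht]
  exact h

theorem PE.eq_zero_of_sum_dotProduct_eq_zero {k : ℕ} (hPE : PE u k) {W : ℕ → Fin m → ℝ}
    (hW : ∀ i, i + k ≤ T →
      ∑ j ∈ range k, W j ⬝ᵥ Function.extend Fin.val u 0 (i + j) = 0) :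
    ∀ j < k, W j = 0 := by
  have hrank : (Hankel u k).rank = Fintype.card (Fin k × Fin m) := by
    simpa [PE, mul_comm] using hPE
  have hzero := Matrix.rank_eq_card_iff_vecMul_eq_zero.1 hrank (fun q => W q.1 q.2) <| by
    funext i
    have hi : i.val + k ≤ T := by have := i.isLt; omega
    rw [Pi.zero_apply, ← hW i hi, ← Fin.sum_univ_eq_sum_range (fun j => W j ⬝ᵥ _)]
    simp only [vecMul, dotProduct, Fintype.sum_prod_type]
    refine sum_congr rfl fun j _ => sum_congr rfl fun s _ => ?_
    rw [Fin.extend_val_apply u (by omega)]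
    rfl
  intro j hj
  funext s
  exact congrFun hzero (⟨j, hj⟩, s)

theorem Controllable.eq_zero_of_vecMul_pow_mul_eq_zero (hcont : Controllable A B)
    {η : Fin n → ℝ} (hη : ∀ d < n, η ᵥ* (A ^ d * B) = 0) : η = 0 :=
  Matrix.rank_eq_card_iff_vecMul_eq_zero.1 (by simpa [Controllable] using hcont) η <| by
    funext q
    exact congrFun (hη q.1 q.1.isLt) q.2

theorem Controllable.eq_zero_of_charpoly_weights_eq_zero (hcont : Controllable A B)
    {η : Fin n → ℝ} {ζ : Fin m → ℝ}
    (hw : ∀ j < n + 1,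
      η ᵥ* (aeval A (divX^[j + 1] A.charpoly) * B) + A.charpoly.coeff j • ζ = 0) :
    η = 0 ∧ ζ = 0 := by
  have hdeg : A.charpoly.natDegree = n := by simp
  have hζ : ζ = 0 := by
    have hlead : A.charpoly.coeff n = 1 := by
      simpa [hdeg] using (charpoly_monic A).coeff_natDegree
    simpa [iterate_divX_eq_zero, hlead] using hw n (by omega)
  let f : ℝ[X] →ₗ[ℝ] (Fin m → ℝ) :=
    { toFun := fun q => η ᵥ* (aeval A q * B)
      map_add' := fun p q => by simp [Matrix.add_mul, vecMul_add]
      map_smul' := fun c q => by simp [vecMul_smul] }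
  have hf : ∀ k, 1 ≤ k → k ≤ A.charpoly.natDegree → f (divX^[k] A.charpoly) = 0 :=
    fun k hk hkn => by
      simpa [f, hζ, Nat.sub_add_cancel hk] using hw (k - 1) (by omega)
  refine ⟨hcont.eq_zero_of_vecMul_pow_mul_eq_zero fun d hd => ?_, hζ⟩
  simpa [f] using map_X_pow_eq_zero_of_map_iterate_divX f (charpoly_monic A) hf d (by omega)

end Data

theorem stmt_3_general {n m T : ℕ}
    (A : Matrix (Fin n) (Fin n) ℝ) (B : Matrix (Fin n) (Fin m) ℝ)
    (hcont : Controllable A B)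
    (u : Fin T → Fin m → ℝ) (hPE : PE u (n + 1))
    (x : Fin (T + 1) → Fin n → ℝ) (hcons : Consistent A B u x) :
    (stacked (Xminus x) (Uminus u)).rank = n + m := by
  have hcard : Fintype.card (Fin n ⊕ Fin m) = n + m := by simp
  rw [← hcard, Matrix.rank_eq_card_iff_vecMul_eq_zero]
  intro ξ hξ
  have hdeg : A.charpoly.degree < ↑(n + 1) := by
    rw [charpoly_degree_eq_dim, Fintype.card_fin]
    exact_mod_cast n.lt_succ_self
  have hw := hPE.eq_zero_of_sum_dotProduct_eq_zero fun i hi =>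
    sum_dotProduct_eq_zero_of_aeval_eq_zero hcons.extend_val (aeval_self_charpoly A) hdeg
      (dotProduct_extend_val_eq_zero_of_vecMul_stacked_eq_zero hξ) hi
  obtain ⟨hη, hζ⟩ := hcont.eq_zero_of_charpoly_weights_eq_zero hw
  funext i
  rcases i with i | j
  · exact congrFun hη i
  · exact congrFun hζ j

/-- Willems et al.: If `(A,B)` is controllable and `u` is persistently
exciting of order `n+1`, then for every state sequence consistent with `(A,B)`,
the stacked matrix `[X₋; U₋]` has rank `n + m`. -/
theorem stmt_3 {n m T : ℕ} (hn : 0 < n) (hm : 0 < m)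
    (A : Matrix (Fin n) (Fin n) ℝ) (B : Matrix (Fin n) (Fin m) ℝ)
    (hcont : Controllable A B)
    (u : Fin T → Fin m → ℝ) (hPE : PE u (n + 1))
    (x : Fin (T + 1) → Fin n → ℝ) (hcons : Consistent A B u x) :
    (stacked (Xminus x) (Uminus u)).rank = n + m :=
  stmt_3_general A B hcont u hPE x hcons
end

section
/- Suppose Σ_pk ⊆ ℝ^{n×n}×ℝ^{n×m} is open in the Euclidean topology and Σ_pk is not a subset of Σ_cont. Then for every T ∈ ℕ there is no input sequence u(0),…,u(T−1) ∈ ℝ^m that is Σ_pk-universal for identification. -/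
open Matrix

/-!
For an uncontrollable `(A, B) ∈ Σ_pk`, let `W` be the span of the columns of all `Aᵏ B`. It is
`A`-invariant, contains the image of `B`, and is proper because, by Cayley–Hamilton, it lies in
the column span of `[B AB ⋯ A^{n-1}B]`. The trajectory from `x(0) = 0` never leaves `W`, so
adding to `A` any nonzero `E` vanishing on `W` keeps the data consistent. Since `Σ_pk` is open,
`(A + cE, B) ∈ Σ_pk` for some `c ≠ 0`, and `Σ_D ∩ Σ_pk` contains two systems.
-/

open Polynomial

section Reachability

variable {n : ℕ} {p : Type*} [Fintype p]

def krylovSpace (A : Matrix (Fin n) (Fin n) ℝ) (C : Matrix (Fin n) p ℝ) :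
    Submodule ℝ (Fin n → ℝ) :=
  ⨆ k : ℕ, LinearMap.range (A ^ k * C).mulVecLin

lemma pow_mul_mulVec_mem_Rspace_of_lt (A : Matrix (Fin n) (Fin n) ℝ) (C : Matrix (Fin n) p ℝ)
    (j : Fin n) (v : p → ℝ) : (A ^ (j : ℕ) * C) *ᵥ v ∈ Rspace A C := by
  refine ⟨fun q => if q.1 = j then v q.2 else 0, funext fun i => ?_⟩
  simp only [Matrix.mulVecLin_apply, Matrix.mulVec, dotProduct, reachMat, Matrix.of_apply,
    Fintype.sum_prod_type, mul_ite, mul_zero]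
  rw [Finset.sum_comm]
  simp

lemma pow_mul_mulVec_mem_Rspace (A : Matrix (Fin n) (Fin n) ℝ) (C : Matrix (Fin n) p ℝ)
    (k : ℕ) (v : p → ℝ) : (A ^ k * C) *ᵥ v ∈ Rspace A C := by
  rcases n.eq_zero_or_pos with rfl | hn
  · rw [Subsingleton.elim ((A ^ k * C) *ᵥ v) 0]
    exact zero_mem _
  -- Cayley–Hamilton: `Aᵏ = r(A)` with `r = Xᵏ mod χ_A` of degree `< n`.
  have hcharpoly : A.charpoly ≠ 1 := fun h => by
    simpa [h] using (A.charpoly_natDegree_eq_dim).trans_gt (by simpa using hn)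
  have hdeg : (X ^ k %ₘ A.charpoly).natDegree < n := by
    simpa using natDegree_modByMonic_lt (X ^ k) A.charpoly_monic hcharpoly
  rw [pow_eq_aeval_mod_charpoly, aeval_eq_sum_range' hdeg, Matrix.sum_mul, sum_mulVec]
  refine Submodule.sum_mem _ fun j hj => ?_
  rw [smul_mul, smul_mulVec]
  exact Submodule.smul_mem _ _
    (pow_mul_mulVec_mem_Rspace_of_lt A C ⟨j, Finset.mem_range.1 hj⟩ v)

lemma krylovSpace_le_Rspace (A : Matrix (Fin n) (Fin n) ℝ) (C : Matrix (Fin n) p ℝ) :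
    krylovSpace A C ≤ Rspace A C :=
  iSup_le fun k => by
    rintro _ ⟨v, rfl⟩
    exact pow_mul_mulVec_mem_Rspace A C k v

lemma mulVec_mem_krylovSpace (A : Matrix (Fin n) (Fin n) ℝ) (C : Matrix (Fin n) p ℝ)
    (v : p → ℝ) : C *ᵥ v ∈ krylovSpace A C :=
  Submodule.mem_iSup_of_mem 0 ⟨v, by simp⟩

lemma mulVec_mem_krylovSpace_of_mem (A : Matrix (Fin n) (Fin n) ℝ) (C : Matrix (Fin n) p ℝ)
    {w : Fin n → ℝ} (hw : w ∈ krylovSpace A C) : A *ᵥ w ∈ krylovSpace A C := by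
  refine Submodule.iSup_induction _ (motive := fun w => A *ᵥ w ∈ krylovSpace A C) hw
    (fun k _ ⟨v, hv⟩ => Submodule.mem_iSup_of_mem (k + 1) ⟨v, ?_⟩) (by simp)
    (fun x y hx hy => by simpa [mulVec_add] using add_mem hx hy)
  simp [← hv, mulVec_mulVec, pow_succ', Matrix.mul_assoc]

lemma krylovSpace_lt_top_of_not_controllable {m : ℕ} {A : Matrix (Fin n) (Fin n) ℝ}
    {B : Matrix (Fin n) (Fin m) ℝ} (hnc : ¬ Controllable A B) : krylovSpace A B < ⊤ := by
  refine lt_top_iff_ne_top.2 fun htop => hnc (le_antisymm ?_ ?_)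
  · simpa using (reachMat A B).rank_le_card_height
  · have h := Submodule.finrank_mono (krylovSpace_le_Rspace A B)
    rw [htop, finrank_top, Module.finrank_fin_fun] at h
    exact h

end Reachability

section Data

variable {n m T : ℕ}

lemma Consistent.mem_of_invariant {A : Matrix (Fin n) (Fin n) ℝ} {B : Matrix (Fin n) (Fin m) ℝ}
    {u : Fin T → Fin m → ℝ} {x : Fin (T + 1) → Fin n → ℝ} (hx : Consistent A B u x)
    {W : Submodule ℝ (Fin n → ℝ)} (hA : ∀ w ∈ W, A *ᵥ w ∈ W) (hB : ∀ v, B *ᵥ v ∈ W)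
    (h0 : x 0 ∈ W) (t : Fin (T + 1)) : x t ∈ W := by
  induction t using Fin.induction with
  | zero => exact h0
  | succ t ih => exact hx t ▸ add_mem (hA _ ih) (hB _)

lemma Consistent.add_of_mulVec_eq_zero {A : Matrix (Fin n) (Fin n) ℝ}
    {B : Matrix (Fin n) (Fin m) ℝ} {u : Fin T → Fin m → ℝ} {x : Fin (T + 1) → Fin n → ℝ}
    (hx : Consistent A B u x)
    {E : Matrix (Fin n) (Fin n) ℝ} (hE : ∀ t : Fin T, E *ᵥ x t.castSucc = 0) :
    Consistent (A + E) B u x := fun t => by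
  rw [add_mulVec, hE, add_zero, hx t]

def trajectory (A : Matrix (Fin n) (Fin n) ℝ) (B : Matrix (Fin n) (Fin m) ℝ)
    (u : Fin T → Fin m → ℝ) (x₀ : Fin n → ℝ) : Fin (T + 1) → Fin n → ℝ :=
  Fin.induction x₀ fun t xt => A *ᵥ xt + B *ᵥ u t

@[simp]
lemma trajectory_zero (A : Matrix (Fin n) (Fin n) ℝ) (B : Matrix (Fin n) (Fin m) ℝ)
    (u : Fin T → Fin m → ℝ) (x₀ : Fin n → ℝ) : trajectory A B u x₀ 0 = x₀ :=
  Fin.induction_zero _ _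

lemma consistent_trajectory (A : Matrix (Fin n) (Fin n) ℝ) (B : Matrix (Fin n) (Fin m) ℝ)
    (u : Fin T → Fin m → ℝ) (x₀ : Fin n → ℝ) : Consistent A B u (trajectory A B u x₀) :=
  fun t => Fin.induction_succ _ _ t

end Data

lemma Submodule.exists_ne_zero_le_ker {K V : Type*} [Field K] [AddCommGroup V] [Module K V]
    {W : Submodule K V} (hW : W < ⊤) : ∃ g : V →ₗ[K] V, g ≠ 0 ∧ W ≤ LinearMap.ker g := by
  obtain ⟨f, hf0, hWf⟩ := W.exists_le_ker_of_lt_top hW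
  obtain ⟨y, -, hy⟩ := SetLike.exists_of_lt hW
  have hy0 : y ≠ 0 := fun h => hy (h ▸ W.zero_mem)
  obtain ⟨z, hz⟩ := DFunLike.ne_iff.1 hf0
  refine ⟨f.smulRight y, fun h => ?_, fun w hw => by simp [LinearMap.mem_ker.1 (hWf hw)]⟩
  exact hz (by simpa [hy0] using LinearMap.congr_fun h z)

lemma IsOpen.exists_ne_zero_add_smul_mem {V : Type*} [AddCommGroup V] [Module ℝ V]
    [TopologicalSpace V] [ContinuousAdd V] [ContinuousSMul ℝ V] {U : Set V} (hU : IsOpen U)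
    {a : V} (ha : a ∈ U) (d : V) : ∃ c : ℝ, c ≠ 0 ∧ a + c • d ∈ U := by
  have hline : Continuous fun c : ℝ => a + c • d := by fun_prop
  have hnhds : ∀ᶠ c in nhds (0 : ℝ), a + c • d ∈ U :=
    hline.continuousAt.preimage_mem_nhds (by simpa using hU.mem_nhds ha)
  obtain ⟨c, hcU, hc0⟩ :=
    ((hnhds.filter_mono nhdsWithin_le_nhds).and self_mem_nhdsWithin).exists
      (f := nhdsWithin 0 {0}ᶜ)
  exact ⟨c, hc0, hcU⟩

theorem stmt_6_general {n m : ℕ}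
    (P : Set (Sys n m)) (hP : IsOpen P) (hnc : ¬ P ⊆ SigmaCont n m) :
    ∀ (T : ℕ) (u : Fin T → Fin m → ℝ), ¬ UnivId P u := by
  intro T u hu
  obtain ⟨⟨A, B⟩, hABP, hABnc⟩ := Set.not_subset.1 hnc
  obtain ⟨g, hg0, hWg⟩ :=
    Submodule.exists_ne_zero_le_ker (krylovSpace_lt_top_of_not_controllable hABnc)
  obtain ⟨c, hc0, hcP⟩ :=
    hP.exists_ne_zero_add_smul_mem hABP ((LinearMap.toMatrix' g, 0) : Sys n m)
  simp only [Prod.smul_mk, smul_zero, Prod.mk_add_mk, add_zero] at hcP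
  set x := trajectory A B u 0
  have hx : Consistent A B u x := consistent_trajectory A B u 0
  have hxW (t) : x t ∈ krylovSpace A B := hx.mem_of_invariant
    (fun _ => mulVec_mem_krylovSpace_of_mem A B) (mulVec_mem_krylovSpace A B) (by simp [x]) t
  have hx' : Consistent (A + c • LinearMap.toMatrix' g) B u x :=
    hx.add_of_mulVec_eq_zero fun t => by
      rw [smul_mulVec, LinearMap.toMatrix'_mulVec, hWg (hxW _), smul_zero]
  obtain ⟨s, hs⟩ := hu (A, B) hABP x hx
  have h1 : ((A, B) : Sys n m) ∈ SigmaD u x ∩ P := ⟨hx, hABP⟩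
  have h2 : ((A + c • LinearMap.toMatrix' g, B) : Sys n m) ∈ SigmaD u x ∩ P := ⟨hx', hcP⟩
  rw [hs] at h1 h2
  have hcg : c • LinearMap.toMatrix' g = 0 := by simpa using congrArg Prod.fst (h2.trans h1.symm)
  exact hg0 (LinearMap.toMatrix'.map_eq_zero_iff.1 ((smul_eq_zero.1 hcg).resolve_left hc0))

/-- If `Σ_pk` is open and not contained in `Σ_cont`, then for every `T`
there is no `Σ_pk`-universal input for identification. -/
theorem stmt_6 {n m : ℕ} (hn : 0 < n) (hm : 0 < m)
    (P : Set (Sys n m)) (hP : IsOpen P) (hnc : ¬ P ⊆ SigmaCont n m) :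
    ∀ (T : ℕ) (u : Fin T → Fin m → ℝ), ¬ UnivId P u :=
  stmt_6_general P hP hnc
end

section
/- Let Σ_pk ⊆ ℝ^{n×n}×ℝ^{n×m} be open in the Euclidean topology. Then there exist T ∈ ℕ and an input sequence u(0),…,u(T−1) ∈ ℝ^m that is Σ_pk-universal for identification if and only if Σ_pk ⊆ Σ_cont. -/
open Matrix

/-! A system `(A, B)` that is not controllable has a covector `a ≠ 0` whose unobservable subspace
`{v | ∀ k, aᵀ Aᵏ v = 0}` contains the range of `B`; that subspace is `A`-invariant, so every
trajectory started at `0` stays in the hyperplane `ker aᵀ`, and the data cannot tell `(A, B)` from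
`(A + ε a aᵀ, B)`, which lies in the open set `Σ_pk` for small `ε ≠ 0`.

Conversely, apply the unit impulses `e₀, …, e_{m-1}` one at a time, each preceded and followed
by `n` zero inputs. If a row `(aᵀ, bᵀ)` annihilates the data of a controllable system, then
`aᵀ x` vanishes along every zero block, so by Cayley–Hamilton the state at the start of each
block lies in the unobservable subspace of `a`. Across the impulse `eⱼ` this subspace then
contains `B eⱼ = x(t + 1) - A x(t)` and forces `bⱼ = 0`; controllability gives `a = 0`. Hence
`[X₋; U₋]` has full row rank and the system is identified. -/

open Filter Topology

theorem Matrix.pow_mem_span_pow_lt_card {R ι : Type*} [CommRing R] [Fintype ι] [DecidableEq ι]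
    (M : Matrix ι ι R) (k : ℕ) :
    M ^ k ∈ Submodule.span R ((M ^ ·) '' Set.Iio (Fintype.card ι)) := by
  nontriviality R
  have hdeg := Polynomial.degree_modByMonic_lt (Polynomial.X ^ k) M.charpoly_monic
  rw [charpoly_degree_eq_dim] at hdeg
  rw [pow_eq_aeval_mod_charpoly, Polynomial.aeval_eq_sum_range]
  refine Submodule.sum_mem _ fun i _ => ?_
  by_cases hi : i < Fintype.card ι
  · exact Submodule.smul_mem _ _ (Submodule.subset_span ⟨i, hi, rfl⟩)
  · rw [Polynomial.coeff_eq_zero_of_degree_lt (hdeg.trans_le (by exact_mod_cast not_lt.1 hi)),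
      zero_smul]
    exact Submodule.zero_mem _

theorem Matrix.rank_eq_card_height_iff {K m n : Type*} [Field K] [Fintype m] [Fintype n]
    (M : Matrix m n K) : M.rank = Fintype.card m ↔ ∀ a : m → K, a ᵥ* M = 0 → a = 0 := by
  rw [rank_eq_finrank_span_row, eq_comm, ← Set.finrank, ← linearIndependent_iff_card_eq_finrank_span,
    ← vecMul_injective_iff, ← coe_vecMulLinear, injective_iff_map_eq_zero]
  rfl

section Unobservable

variable {R ι : Type*} [CommRing R] [Fintype ι] [DecidableEq ι]

/-- The unobservable subspace of the pair `(aᵀ, A)`: the largest `A`-invariant subspace of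
`ker aᵀ`. -/
def unobservableSubspace (A : Matrix ι ι R) (a : ι → R) : Submodule R (ι → R) where
  carrier := {v | ∀ k : ℕ, a ⬝ᵥ (A ^ k *ᵥ v) = 0}
  add_mem' hv hw k := by simp [mulVec_add, dotProduct_add, hv k, hw k]
  zero_mem' k := by simp
  smul_mem' c v hv k := by simp [mulVec_smul, dotProduct_smul, hv k]

variable {A : Matrix ι ι R} {a v : ι → R}

theorem dotProduct_eq_zero_of_mem_unobservableSubspace (hv : v ∈ unobservableSubspace A a) :
    a ⬝ᵥ v = 0 := by
  simpa using hv 0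

theorem pow_mulVec_mem_unobservableSubspace (hv : v ∈ unobservableSubspace A a) (r : ℕ) :
    A ^ r *ᵥ v ∈ unobservableSubspace A a := fun k => by
  rw [mulVec_mulVec, ← pow_add]
  exact hv (k + r)

theorem mulVec_mem_unobservableSubspace (hv : v ∈ unobservableSubspace A a) :
    A *ᵥ v ∈ unobservableSubspace A a := by
  simpa using pow_mulVec_mem_unobservableSubspace hv 1

theorem mem_unobservableSubspace_of_forall_lt_card
    (h : ∀ i < Fintype.card ι, a ⬝ᵥ (A ^ i *ᵥ v) = 0) : v ∈ unobservableSubspace A a := by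
  intro k
  have hk := A.pow_mem_span_pow_lt_card k
  generalize A ^ k = M at hk ⊢
  induction hk using Submodule.span_induction with
  | mem M hM =>
    obtain ⟨i, hi, rfl⟩ := hM
    exact h i hi
  | zero => simp
  | add M N _ _ hM hN => rw [add_mulVec, dotProduct_add, hM, hN, add_zero]
  | smul c M _ hM => rw [smul_mulVec, dotProduct_smul, hM, smul_zero]

theorem eq_pow_mulVec_of_forall_lt {x : ℕ → ι → R} {s r : ℕ}
    (h : ∀ q < r, x (s + q + 1) = A *ᵥ x (s + q)) : x (s + r) = A ^ r *ᵥ x s := by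
  induction r with
  | zero => simp
  | succ r ih =>
    rw [← add_assoc, h r r.lt_succ_self, ih fun q hq => h q (hq.trans r.lt_succ_self),
      mulVec_mulVec, pow_succ']

theorem mem_unobservableSubspace_of_forall_lt {x : ℕ → ι → R} {s : ℕ}
    (hfree : ∀ q < Fintype.card ι, x (s + q + 1) = A *ᵥ x (s + q))
    (hout : ∀ q < Fintype.card ι, a ⬝ᵥ x (s + q) = 0) : x s ∈ unobservableSubspace A a :=
  mem_unobservableSubspace_of_forall_lt_card fun i hi => by
    rw [← eq_pow_mulVec_of_forall_lt fun q hq => hfree q (hq.trans hi), hout i hi]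

end Unobservable

section StateTrajectory

variable {R ι κ : Type*} [CommRing R] [Fintype ι] [Fintype κ] {T : ℕ} {A : Matrix ι ι R}
  {B : Matrix ι κ R} {x₀ : ι → R} {u : Fin T → κ → R}

def stateTrajectory (A : Matrix ι ι R) (B : Matrix ι κ R) (x₀ : ι → R) (u : Fin T → κ → R) :
    Fin (T + 1) → ι → R :=
  Fin.induction x₀ fun t x => A *ᵥ x + B *ᵥ u t

theorem stateTrajectory_succ (t : Fin T) :
    stateTrajectory A B x₀ u t.succ = A *ᵥ stateTrajectory A B x₀ u t.castSucc + B *ᵥ u t :=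
  Fin.induction_succ _ _ t

theorem stateTrajectory_mem {W : Submodule R (ι → R)} (hA : ∀ v ∈ W, A *ᵥ v ∈ W)
    (hB : LinearMap.range B.mulVecLin ≤ W) (hx₀ : x₀ ∈ W) (t : Fin (T + 1)) :
    stateTrajectory A B x₀ u t ∈ W := by
  induction t using Fin.induction with
  | zero => exact hx₀
  | succ t ih =>
    rw [stateTrajectory_succ]
    exact W.add_mem (hA _ ih) (hB ⟨u t, rfl⟩)

end StateTrajectory

section Systems

variable {n m T : ℕ} {A A' : Matrix (Fin n) (Fin n) ℝ} {B B' : Matrix (Fin n) (Fin m) ℝ}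
  {u : Fin T → Fin m → ℝ} {x : Fin (T + 1) → Fin n → ℝ}

theorem consistent_stateTrajectory (x₀ : Fin n → ℝ) :
    Consistent A B u (stateTrajectory A B x₀ u) :=
  stateTrajectory_succ

theorem controllable_iff_range_le_unobservableSubspace :
    Controllable A B ↔
      ∀ a : Fin n → ℝ, LinearMap.range B.mulVecLin ≤ unobservableSubspace A a → a = 0 := by
  have hentry : ∀ (a : Fin n → ℝ) (q : Fin n × Fin m),
      (a ᵥ* reachMat A B) q = a ⬝ᵥ (A ^ (q.1 : ℕ) *ᵥ B.col q.2) := fun a q => by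
    rw [← mulVec_single_one, mulVec_mulVec, mulVec_single_one]
    rfl
  have hreach : ∀ a : Fin n → ℝ, a ᵥ* reachMat A B = 0 ↔
      LinearMap.range B.mulVecLin ≤ unobservableSubspace A a := fun a => by
    rw [range_mulVecLin, Submodule.span_le, Set.range_subset_iff]
    refine ⟨fun h j => mem_unobservableSubspace_of_forall_lt_card fun i hi => ?_,
      fun h => funext fun q => ?_⟩
    · simpa [hentry] using congrFun h (⟨i, by simpa using hi⟩, j)
    · rw [hentry]
      exact h q.2 q.1
  have hrank := (reachMat A B).rank_eq_card_height_iff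
  rw [Fintype.card_fin] at hrank
  rw [Controllable, hrank]
  exact forall_congr' fun a => imp_congr_left (hreach a)

theorem Consistent.eq_of_consistent
    (hexc : ∀ (a : Fin n → ℝ) (b : Fin m → ℝ),
      (∀ t : Fin T, a ⬝ᵥ x t.castSucc + b ⬝ᵥ u t = 0) → a = 0 ∧ b = 0)
    (h : Consistent A B u x) (h' : Consistent A' B' u x) : A = A' ∧ B = B' := by
  have hrow : ∀ i, A i - A' i = 0 ∧ B i - B' i = 0 := fun i => hexc _ _ fun t => by
    have e := congrFun (h t) i
    have e' := congrFun (h' t) i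
    simp only [Pi.add_apply, mulVec] at e e'
    rw [sub_dotProduct, sub_dotProduct]
    linarith
  exact ⟨funext fun i => sub_eq_zero.mp (hrow i).1, funext fun i => sub_eq_zero.mp (hrow i).2⟩

theorem not_infId_of_dotProduct_eq_zero {P : Set (Sys n m)} (hP : IsOpen P) (hAB : (A, B) ∈ P)
    (hx : Consistent A B u x) {a : Fin n → ℝ} (ha : a ≠ 0)
    (hxa : ∀ t : Fin T, a ⬝ᵥ x t.castSucc = 0) : ¬ InfId P u x := by
  rintro ⟨s, hs⟩
  have hcons : ∀ ε : ℝ, Consistent (A + ε • vecMulVec a a) B u x := fun ε t => by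
    rw [add_mulVec, smul_mulVec, vecMulVec_mulVec, hxa t]
    simpa using hx t
  have hnear : ∀ᶠ ε in 𝓝 (0 : ℝ), (A + ε • vecMulVec a a, B) ∈ P :=
    (Continuous.continuousAt (by fun_prop)).eventually_mem (by simpa using hP.mem_nhds hAB)
  obtain ⟨ε, hεP, hε⟩ : ∃ ε : ℝ, (A + ε • vecMulVec a a, B) ∈ P ∧ ε ≠ 0 :=
    ((hnear.filter_mono nhdsWithin_le_nhds).and (self_mem_nhdsWithin (s := {0}ᶜ))).exists
  have h₁ : (A, B) ∈ SigmaD u x ∩ P := ⟨hx, hAB⟩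
  have h₂ : (A + ε • vecMulVec a a, B) ∈ SigmaD u x ∩ P := ⟨hcons ε, hεP⟩
  rw [hs] at h₁ h₂
  have hE : ε • vecMulVec a a = 0 := by simpa using congrArg Prod.fst (h₂.trans h₁.symm)
  obtain ⟨i, hi⟩ := Function.ne_iff.mp ha
  exact hi (by simpa [hε, vecMulVec_apply] using congrFun (congrFun hE i) i)

end Systems

section Impulse

def impulse (n m : ℕ) (t : ℕ) : Fin m → ℝ :=
  fun j => if t = j * (n + 1) + n then 1 else 0

theorem impulse_mul_add_of_lt {n m q : ℕ} (j : ℕ) (hq : q < n) :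
    impulse n m (j * (n + 1) + q) = 0 := by
  funext i
  refine if_neg fun h => ?_
  have := congrArg (· % (n + 1)) h
  simp only [Nat.mul_add_mod_self_right, Nat.mod_eq_of_lt (hq.trans n.lt_succ_self),
    Nat.mod_eq_of_lt n.lt_succ_self] at this
  omega

theorem impulse_mul_add_self {n m : ℕ} (j : Fin m) :
    impulse n m (j * (n + 1) + n) = Pi.single j 1 := by
  funext i
  simp only [impulse, Pi.single_apply, add_left_inj, mul_left_inj' n.succ_ne_zero, Fin.val_inj,
    eq_comm]

variable {n m : ℕ} {A : Matrix (Fin n) (Fin n) ℝ} {B : Matrix (Fin n) (Fin m) ℝ}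

theorem eq_zero_of_annihilates_impulse_trajectory (hAB : Controllable A B) {x : ℕ → Fin n → ℝ}
    (hx : ∀ t < m * (n + 1) + n, x (t + 1) = A *ᵥ x t + B *ᵥ impulse n m t)
    {a : Fin n → ℝ} {b : Fin m → ℝ}
    (hab : ∀ t < m * (n + 1) + n, a ⬝ᵥ x t + b ⬝ᵥ impulse n m t = 0) : a = 0 ∧ b = 0 := by
  have hlt : ∀ j ≤ m, ∀ q < n, j * (n + 1) + q < m * (n + 1) + n := fun j hj q hq => by
    nlinarith
  have hfree : ∀ j ≤ m, ∀ q < n, x (j * (n + 1) + q + 1) = A *ᵥ x (j * (n + 1) + q) :=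
    fun j hj q hq => by
      rw [hx _ (hlt j hj q hq), impulse_mul_add_of_lt j hq, mulVec_zero, add_zero]
  have hblock : ∀ j ≤ m, x (j * (n + 1)) ∈ unobservableSubspace A a := fun j hj =>
    mem_unobservableSubspace_of_forall_lt (by simpa using hfree j hj) fun q hq => by
      simpa [impulse_mul_add_of_lt j (Fintype.card_fin n ▸ hq)] using
        hab _ (hlt j hj q (by simpa using hq))
  have hbefore : ∀ j : Fin m, x (j * (n + 1) + n) ∈ unobservableSubspace A a := fun j => by
    rw [eq_pow_mulVec_of_forall_lt (hfree j j.is_le')]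
    exact pow_mulVec_mem_unobservableSubspace (hblock j j.is_le') n
  have himpulse : ∀ j : Fin m, x (j * (n + 1) + n + 1) =
      A *ᵥ x (j * (n + 1) + n) + B.col j := fun j => by
    rw [hx _ (by nlinarith [j.is_lt]), impulse_mul_add_self, mulVec_single_one]
  refine ⟨controllable_iff_range_le_unobservableSubspace.mp hAB a ?_, funext fun j => ?_⟩
  · rw [range_mulVecLin, Submodule.span_le]
    rintro _ ⟨j, rfl⟩
    have hafter : x (j * (n + 1) + n + 1) ∈ unobservableSubspace A a := by
      convert hblock (j + 1) j.is_lt using 2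
      ring
    rw [himpulse] at hafter
    simpa using sub_mem hafter (mulVec_mem_unobservableSubspace (hbefore j))
  · have := hab (j * (n + 1) + n) (by nlinarith [j.is_lt])
    rwa [dotProduct_eq_zero_of_mem_unobservableSubspace (hbefore j), zero_add,
      impulse_mul_add_self, dotProduct_single, mul_one] at this

theorem Consistent.eq_zero_of_annihilates_impulse {x : Fin (m * (n + 1) + n + 1) → Fin n → ℝ}
    (hx : Consistent A B (impulse n m ·) x) (hAB : Controllable A B)
    (a : Fin n → ℝ) (b : Fin m → ℝ)
    (hab : ∀ t : Fin (m * (n + 1) + n), a ⬝ᵥ x t.castSucc + b ⬝ᵥ impulse n m t = 0) :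
    a = 0 ∧ b = 0 := by
  have hclamp : ∀ {t} (ht : t < m * (n + 1) + n),
      Fin.clamp t _ = (⟨t, ht⟩ : Fin _).castSucc ∧ Fin.clamp (t + 1) _ = (⟨t, ht⟩ : Fin _).succ :=
    fun ht => ⟨Fin.ext (by simp [Fin.clamp]; omega), Fin.ext (by simp [Fin.clamp]; omega)⟩
  refine eq_zero_of_annihilates_impulse_trajectory hAB (x := fun t => x (Fin.clamp t _))
    (fun t ht => ?_) fun t ht => ?_
  · simpa only [(hclamp ht).1, (hclamp ht).2] using hx ⟨t, ht⟩
  · simpa only [(hclamp ht).1] using hab ⟨t, ht⟩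

end Impulse

theorem stmt_7_general {n m : ℕ}
    (P : Set (Sys n m)) (hP : IsOpen P) :
    (∃ (T : ℕ) (u : Fin T → Fin m → ℝ), UnivId P u) ↔ P ⊆ SigmaCont n m := by
  constructor
  · rintro ⟨T, u, hu⟩ ⟨A, B⟩ hAB
    by_contra hc
    obtain ⟨a, hBa, ha⟩ : ∃ a, LinearMap.range B.mulVecLin ≤ unobservableSubspace A a ∧ a ≠ 0 := by
      simpa [SigmaCont, controllable_iff_range_le_unobservableSubspace] using hc
    have hx : Consistent A B u (stateTrajectory A B 0 u) := consistent_stateTrajectory 0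
    refine not_infId_of_dotProduct_eq_zero hP hAB hx ha (fun t => ?_) (hu _ hAB _ hx)
    exact dotProduct_eq_zero_of_mem_unobservableSubspace <|
      stateTrajectory_mem (fun _ => mulVec_mem_unobservableSubspace) hBa (zero_mem _) _
  · intro hPC
    refine ⟨m * (n + 1) + n, (impulse n m ·), fun ⟨A, B⟩ hAB x hx => ⟨(A, B), ?_⟩⟩
    refine Set.eq_singleton_iff_unique_mem.2 ⟨⟨hx, hAB⟩, fun ⟨A', B'⟩ ⟨hx', _⟩ => ?_⟩
    obtain ⟨rfl, rfl⟩ := hx'.eq_of_consistent (hx.eq_zero_of_annihilates_impulse (hPC hAB)) hx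
    rfl

/-- For open `Σ_pk`, there exists a `Σ_pk`-universal input for
identification (of some length `T`) iff `Σ_pk ⊆ Σ_cont`. -/
theorem stmt_7 {n m : ℕ} (hn : 0 < n) (hm : 0 < m)
    (P : Set (Sys n m)) (hP : IsOpen P) :
    (∃ (T : ℕ) (u : Fin T → Fin m → ℝ), UnivId P u) ↔ P ⊆ SigmaCont n m :=
  stmt_7_general P hP
end

section
/- For every T ∈ ℕ there is no input sequence u(0),…,u(T−1) ∈ ℝ^m that is Σ_stab-universal for identification. -/
open Matrix

/-!
For a system with `B = 0` the zero state trajectory is consistent with the data, whatever the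
input. So a `Σ_stab`-universal input would have to tell apart, from identically zero data, any
two stabilizable systems `(A, 0)` and `(A', 0)`; but `(0, 0)` and `(½ • 1, 0)` are both
stabilizable (with `K = 0`, being Schur already).
-/

lemma consistent_zero_state {n m T : ℕ} (A : Matrix (Fin n) (Fin n) ℝ)
    (u : Fin T → Fin m → ℝ) : Consistent A (0 : Matrix (Fin n) (Fin m) ℝ) u 0 := by
  intro t
  simp

lemma UnivId.eq_of_input_matrix_zero {n m T : ℕ} {P : Set (Sys n m)} {u : Fin T → Fin m → ℝ}
    (h : UnivId P u) {A A' : Matrix (Fin n) (Fin n) ℝ} (hA : (A, 0) ∈ P) (hA' : (A', 0) ∈ P) :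
    A = A' := by
  obtain ⟨s, hs⟩ := h (A, 0) hA 0 (consistent_zero_state A u)
  have mem_s {A₀ : Matrix (Fin n) (Fin n) ℝ} (hA₀ : (A₀, 0) ∈ P) : (A₀, 0) = s := by
    rw [← Set.mem_singleton_iff, ← hs]
    exact ⟨consistent_zero_state A₀ u, hA₀⟩
  exact congrArg Prod.fst ((mem_s hA).trans (mem_s hA').symm)

lemma schur_smul_one {n : ℕ} {c : ℝ} (hc : |c| < 1) :
    Schur (c • (1 : Matrix (Fin n) (Fin n) ℝ)) := by
  intro μ hμ
  have hmap : (c • (1 : Matrix (Fin n) (Fin n) ℝ)).map ((↑·) : ℝ → ℂ) =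
      algebraMap ℂ (Matrix (Fin n) (Fin n) ℂ) c := by
    rw [Matrix.map_smul _ _ (fun a => by simp), Matrix.map_one _ (by simp) (by simp),
      Algebra.algebraMap_eq_smul_one, Complex.coe_smul]
  rw [hmap, spectrum.mem_iff, ← map_sub] at hμ
  obtain rfl : μ = c := by
    by_contra hne
    exact hμ ((sub_ne_zero.mpr hne).isUnit.map _)
  simpa using hc

lemma Stabilizable.of_schur {n m : ℕ} {A : Matrix (Fin n) (Fin n) ℝ}
    (B : Matrix (Fin n) (Fin m) ℝ) (hA : Schur A) : Stabilizable A B :=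
  ⟨0, by simpa using hA⟩

theorem stmt_8_general {n m : ℕ} (hn : 0 < n) :
    ∀ (T : ℕ) (u : Fin T → Fin m → ℝ), ¬ UnivId (SigmaStab n m) u := by
  intro T u h
  have mem_sigmaStab {c : ℝ} (hc : |c| < 1) :
      (c • (1 : Matrix (Fin n) (Fin n) ℝ), 0) ∈ SigmaStab n m :=
    Stabilizable.of_schur _ (schur_smul_one hc)
  have heq := h.eq_of_input_matrix_zero (mem_sigmaStab (c := 0) (by norm_num))
    (mem_sigmaStab (c := 1 / 2) (by norm_num [abs_of_pos]))
  have := congrFun (congrFun heq ⟨0, hn⟩) ⟨0, hn⟩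
  norm_num at this

/-- There are no `Σ_stab`-universal inputs for identification. -/
theorem stmt_8 {n m : ℕ} (hn : 0 < n) (hm : 0 < m) :
    ∀ (T : ℕ) (u : Fin T → Fin m → ℝ), ¬ UnivId (SigmaStab n m) u :=
  stmt_8_general hn
end

section
/- Let D be input-state data of length T consistent with some system (A_true,B_true). Then D is M-informative for stabilization if and only if X_- has full row rank n and there exists a right inverse X_-† ∈ ℝ^{T×n} of X_- (i.e., X_- X_-† = I_n) such that X_+ X_-† is Schur. -/
/-! If `X₋ Θ = I`, every consistent `(A, B)` satisfies `A + B (U₋ Θ) = X₊ Θ`, so `K = U₋ Θ`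
stabilizes all of them at once.

Conversely, let `K` stabilize every consistent system and let `[η; ζ]` be a left null vector of
`[X₋; U₋]`. Adding `c ψ [ηᵀ ζᵀ]` to a consistent `(A, B)` keeps it consistent and adds
`c ψ (η + Kᵀ ζ)ᵀ` to its closed loop. For `ψ = η + Kᵀ ζ ≠ 0` the trace of that closed loop is
unbounded in `c`, whereas a Schur matrix has trace of modulus at most `n`. So `η + Kᵀ ζ = 0`, i.e.
`[I; K]` lies in the column span of `[X₋; U₋]`: there is `Θ` with `X₋ Θ = I` and `U₋ Θ = K`, and
`X₊ Θ = A_true + B_true K` is Schur. -/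

open Matrix

open Polynomial

lemma Matrix.norm_trace_le_of_forall_mem_spectrum {ι : Type*} [Fintype ι] [DecidableEq ι]
    (M : Matrix ι ι ℂ) {r : ℝ} (h : ∀ μ ∈ spectrum ℂ M, ‖μ‖ ≤ r) :
    ‖M.trace‖ ≤ Fintype.card ι * r := by
  have hroots : ∀ a ∈ M.charpoly.roots.map norm, a ≤ r := by
    simp only [Multiset.mem_map]
    rintro _ ⟨μ, hμ, rfl⟩
    exact h μ (mem_spectrum_iff_isRoot_charpoly.mpr (isRoot_of_mem_roots hμ))
  calc ‖M.trace‖ = ‖M.charpoly.roots.sum‖ := by rw [trace_eq_sum_roots_charpoly]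
    _ ≤ (M.charpoly.roots.map norm).sum := norm_multiset_sum_le _
    _ ≤ (M.charpoly.roots.map norm).card • r := Multiset.sum_le_card_nsmul _ _ hroots
    _ = Fintype.card ι * r := by
      rw [Multiset.card_map, IsAlgClosed.card_roots_eq_natDegree, charpoly_natDegree_eq_dim,
        nsmul_eq_mul]

lemma Schur.abs_trace_le {n : ℕ} {M : Matrix (Fin n) (Fin n) ℝ} (h : Schur M) :
    |M.trace| ≤ n := by
  have htr : (M.map ((↑·) : ℝ → ℂ)).trace = M.trace :=
    (AddMonoidHom.map_trace Complex.ofRealHom M).symm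
  have := (M.map ((↑·) : ℝ → ℂ)).norm_trace_le_of_forall_mem_spectrum fun μ hμ => (h μ hμ).le
  rwa [htr, Complex.norm_real, Real.norm_eq_abs, Fintype.card_fin, mul_one] at this

lemma exists_not_schur_add_smul_vecMulVec_self {n : ℕ} (S : Matrix (Fin n) (Fin n) ℝ)
    {ψ : Fin n → ℝ} (hψ : ψ ≠ 0) : ∃ c : ℝ, ¬ Schur (S + c • vecMulVec ψ ψ) := by
  have hpos : 0 < ψ ⬝ᵥ ψ := by simpa using dotProduct_self_star_pos_iff.mpr hψ
  refine ⟨(n + 1 + |S.trace|) / (ψ ⬝ᵥ ψ), fun h => ?_⟩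
  have := (abs_le.mp h.abs_trace_le).2
  rw [trace_add, trace_smul, trace_vecMulVec, smul_eq_mul, div_mul_cancel₀ _ hpos.ne'] at this
  linarith [neg_abs_le S.trace]

lemma Matrix.exists_mulVec_eq_of_forall_vecMul_eq_zero {K k T : Type*} [Field K] [Fintype k]
    [Fintype T] (W : Matrix k T K) (v : k → K) (h : ∀ η, η ᵥ* W = 0 → η ⬝ᵥ v = 0) :
    ∃ c, W *ᵥ c = v := by
  classical
  by_contra! hv
  obtain ⟨f, hfv, hWf⟩ := Submodule.exists_le_ker_of_notMem
    (p := LinearMap.range W.mulVecLin) (v := v) (by simpa using hv)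
  set η : k → K := fun i => f fun j => if i = j then 1 else 0
  have hf : ∀ w, f w = η ⬝ᵥ w := fun w => by
    simp [LinearMap.pi_apply_eq_sum_univ f w, η, dotProduct, mul_comm]
  apply hfv
  rw [hf]
  refine h η (dotProduct_eq_zero_iff.mp fun c => ?_)
  rw [← dotProduct_mulVec, ← hf]
  exact hWf ⟨c, rfl⟩

lemma Matrix.exists_mul_eq_of_forall_vecMul_eq_zero {K k l T : Type*} [Field K] [Fintype k]
    [Fintype T] (W : Matrix k T K) (M : Matrix k l K) (h : ∀ η, η ᵥ* W = 0 → η ᵥ* M = 0) :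
    ∃ Θ : Matrix T l K, W * Θ = M := by
  choose c hc using fun j => W.exists_mulVec_eq_of_forall_vecMul_eq_zero (fun i => M i j)
    fun η hη => congrFun (h η hη) j
  exact ⟨.of fun t j => c j t, by ext i j; exact congrFun (hc j) i⟩

lemma Matrix.rank_eq_card_of_mul_eq_one {K k l : Type*} [Field K] [Fintype k] [Fintype l]
    [DecidableEq k] {X : Matrix k l K} {Θ : Matrix l k K} (h : X * Θ = 1) :
    X.rank = Fintype.card k :=
  le_antisymm X.rank_le_card_height (by simpa [h, rank_one] using X.rank_mul_le_left Θ)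

section Data

variable {n m T : ℕ} {A : Matrix (Fin n) (Fin n) ℝ} {B : Matrix (Fin n) (Fin m) ℝ}
  {u : Fin T → Fin m → ℝ} {x : Fin (T + 1) → Fin n → ℝ}

lemma consistent_iff : Consistent A B u x ↔ Xplus x = A * Xminus x + B * Uminus u := by
  constructor
  · intro h
    ext i t
    simpa [Xplus, Xminus, Uminus, mul_apply, mulVec, dotProduct] using congrFun (h t) i
  · intro h t
    funext i
    simpa [Xplus, Xminus, Uminus, mul_apply, mulVec, dotProduct] using congrFun (congrFun h i) t

lemma Consistent.add_vecMulVec (h : Consistent A B u x) (ψ : Fin n → ℝ) {η : Fin n → ℝ}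
    {ζ : Fin m → ℝ} (hηζ : η ᵥ* Xminus x + ζ ᵥ* Uminus u = 0) :
    Consistent (A + vecMulVec ψ η) (B + vecMulVec ψ ζ) u x := by
  rw [consistent_iff] at h ⊢
  have hzero : vecMulVec ψ (η ᵥ* Xminus x) + vecMulVec ψ (ζ ᵥ* Uminus u) = 0 := by
    rw [← vecMulVec_add, hηζ]
    ext
    simp [vecMulVec_apply]
  rw [h, Matrix.add_mul, Matrix.add_mul, vecMulVec_mul, vecMulVec_mul, add_add_add_comm, hzero,
    add_zero]

lemma Consistent.add_mul_eq_of_mul_eq_one (h : Consistent A B u x)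
    {Θ : Matrix (Fin T) (Fin n) ℝ} (hΘ : Xminus x * Θ = 1) :
    A + B * (Uminus u * Θ) = Xplus x * Θ := by
  rw [consistent_iff.mp h, Matrix.add_mul, Matrix.mul_assoc, Matrix.mul_assoc, hΘ, Matrix.mul_one]

lemma add_vecMul_eq_zero_of_forall_schur {K : Matrix (Fin m) (Fin n) ℝ}
    (hK : ∀ AB ∈ SigmaD u x, Schur (AB.1 + AB.2 * K)) (h : Consistent A B u x)
    {η : Fin n → ℝ} {ζ : Fin m → ℝ} (hηζ : η ᵥ* Xminus x + ζ ᵥ* Uminus u = 0) :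
    η + ζ ᵥ* K = 0 := by
  by_contra hψ
  obtain ⟨c, hc⟩ := exists_not_schur_add_smul_vecMulVec_self (A + B * K) hψ
  refine hc ?_
  convert hK (_, _) (h.add_vecMulVec (c • (η + ζ ᵥ* K)) hηζ) using 1
  rw [smul_vecMulVec, smul_vecMulVec, Matrix.add_mul, Matrix.smul_mul, vecMulVec_mul,
    vecMulVec_add, smul_add]
  dsimp only
  abel

lemma exists_mul_eq_one_of_forall_schur {K : Matrix (Fin m) (Fin n) ℝ}
    (hK : ∀ AB ∈ SigmaD u x, Schur (AB.1 + AB.2 * K)) (h : Consistent A B u x) :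
    ∃ Θ : Matrix (Fin T) (Fin n) ℝ, Xminus x * Θ = 1 ∧ Uminus u * Θ = K := by
  have hnull : ∀ η, η ᵥ* fromRows (Xminus x) (Uminus u) = 0 → η ᵥ* fromRows 1 K = 0 := by
    intro η hη
    rw [← Sum.elim_comp_inl_inr η, sumElim_vecMul_fromRows] at hη ⊢
    rw [vecMul_one]
    exact add_vecMul_eq_zero_of_forall_schur hK h hη
  obtain ⟨Θ, hΘ⟩ := exists_mul_eq_of_forall_vecMul_eq_zero _ _ hnull
  rw [fromRows_mul] at hΘ
  exact ⟨Θ, fromRows_inj hΘ⟩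

end Data

theorem stmt_9_general {n m T : ℕ}
    (Atrue : Matrix (Fin n) (Fin n) ℝ) (Btrue : Matrix (Fin n) (Fin m) ℝ)
    (u : Fin T → Fin m → ℝ) (x : Fin (T + 1) → Fin n → ℝ)
    (hcons : Consistent Atrue Btrue u x) :
    InfStab Set.univ u x ↔
      ((Xminus x).rank = n ∧
        ∃ Xdag : Matrix (Fin T) (Fin n) ℝ,
          Xminus x * Xdag = 1 ∧ Schur (Xplus x * Xdag)) := by
  constructor
  · rintro ⟨K, hK⟩
    have hK' : ∀ AB ∈ SigmaD u x, Schur (AB.1 + AB.2 * K) := fun AB hAB => hK AB ⟨hAB, trivial⟩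
    obtain ⟨Θ, hΘ, rfl⟩ := exists_mul_eq_one_of_forall_schur hK' hcons
    refine ⟨(rank_eq_card_of_mul_eq_one hΘ).trans (Fintype.card_fin n), Θ, hΘ, ?_⟩
    rw [← hcons.add_mul_eq_of_mul_eq_one hΘ]
    exact hK' (Atrue, Btrue) hcons
  · rintro ⟨-, Θ, hΘ, hschur⟩
    refine ⟨Uminus u * Θ, fun AB hAB => ?_⟩
    rwa [hAB.1.add_mul_eq_of_mul_eq_one hΘ]

/-- Data consistent with some system is `M`-informative for
stabilization iff `X₋` has full row rank `n` and there is a right inverse `X₋†`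
of `X₋` such that `X₊ X₋†` is Schur. -/
theorem stmt_9 {n m T : ℕ} (hn : 0 < n) (hm : 0 < m)
    (Atrue : Matrix (Fin n) (Fin n) ℝ) (Btrue : Matrix (Fin n) (Fin m) ℝ)
    (u : Fin T → Fin m → ℝ) (x : Fin (T + 1) → Fin n → ℝ)
    (hcons : Consistent Atrue Btrue u x) :
    InfStab Set.univ u x ↔
      ((Xminus x).rank = n ∧
        ∃ Xdag : Matrix (Fin T) (Fin n) ℝ,
          Xminus x * Xdag = 1 ∧ Schur (Xplus x * Xdag)) :=
  stmt_9_general Atrue Btrue u x hcons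
end

section
/- Suppose (A_true,B_true) is controllable and D is input-state data of length T consistent with (A_true,B_true). Then D is Σ_cont-informative for stabilization if and only if D is M-informative for stabilization. -/
open Matrix

/-!
Informativity for `M` trivially implies informativity for `Σ_cont`. Conversely, let `K`
stabilize every controllable system consistent with the data, and let `(A, B)` be any consistent
system. Every system on the line `t ↦ (A_true, B_true) + t • (A - A_true, B - B_true)` is
consistent, and all but finitely many are controllable: the determinant of the Gramian of the
reachability matrix is a polynomial in `t` that does not vanish at `t = 0`. So the closed-loop
matrix of the system at `t`, which is affine in `t`, is Schur for all but finitely many `t`. The coefficients of the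
characteristic polynomial of a Schur matrix are bounded (by `n.choose (n / 2)`), and along the
line they are polynomials in `t`; bounded off a finite set, they are constant. Hence
`A + B * K` (at `t = 1`) has the characteristic polynomial of a Schur matrix.
-/

open Polynomial Filter

section Line

variable {ι κ R : Type*} [CommRing R]

noncomputable def linePoly (M₀ N : Matrix ι κ R) : Matrix ι κ R[X] :=
  M₀.map C + (X : R[X]) • N.map C

lemma map_eval_linePoly (M₀ N : Matrix ι κ R) (t : R) :
    (linePoly M₀ N).map (evalRingHom t) = M₀ + t • N := by
  ext i j
  simp only [linePoly, coe_evalRingHom, Matrix.map_apply, Matrix.add_apply, Matrix.smul_apply,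
    smul_eq_mul, X_mul_C, eval_add, eval_C, eval_mul, eval_X]
  ring

end Line

lemma Polynomial.degree_le_zero_of_eventually_abs_le {p : ℝ[X]} {c : ℝ}
    (h : ∀ᶠ t : ℝ in cofinite, |p.eval t| ≤ c) : p.degree ≤ 0 :=
  p.isBoundedUnder_abs_atTop_iff.mp ⟨c, eventually_map.mpr (atTop_le_cofinite h)⟩

lemma Matrix.rank_eq_card_iff_det_ne_zero {ι K : Type*} [Fintype ι] [DecidableEq ι] [Field K]
    (G : Matrix ι ι K) : G.rank = Fintype.card ι ↔ G.det ≠ 0 := by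
  refine ⟨fun h => ?_, rank_of_det_ne_zero⟩
  have hrange : LinearMap.range G.mulVecLin = ⊤ :=
    Submodule.eq_top_of_finrank_eq (by rw [← Matrix.rank, h, Module.finrank_fintype_fun_eq_card])
  rw [← isUnit_iff_ne_zero, ← Matrix.isUnit_iff_isUnit_det, ← Matrix.mulVec_surjective_iff_isUnit]
  exact LinearMap.range_eq_top.mp hrange

section Schur

variable {n : ℕ}

lemma mem_spectrum_map_ofReal_iff (M : Matrix (Fin n) (Fin n) ℝ) (μ : ℂ) :
    μ ∈ spectrum ℂ (M.map ((↑·) : ℝ → ℂ)) ↔ (M.charpoly.map Complex.ofRealHom).IsRoot μ := by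
  rw [Matrix.mem_spectrum_iff_isRoot_charpoly, ← Matrix.charpoly_map]
  rfl

lemma Schur.of_charpoly_eq {M M' : Matrix (Fin n) (Fin n) ℝ} (hM : Schur M)
    (h : M.charpoly = M'.charpoly) : Schur M' := by
  intro μ hμ
  rw [mem_spectrum_map_ofReal_iff, ← h, ← mem_spectrum_map_ofReal_iff] at hμ
  exact hM μ hμ

lemma Schur.abs_coeff_charpoly_le {M : Matrix (Fin n) (Fin n) ℝ} (hM : Schur M) (i : ℕ) :
    |M.charpoly.coeff i| ≤ n.choose (n / 2) := by
  have hroots : ∀ z ∈ (M.charpoly.map Complex.ofRealHom).roots, ‖z‖ ≤ 1 := fun z hz =>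
    (hM z ((mem_spectrum_map_ofReal_iff M z).mpr (isRoot_of_mem_roots hz))).le
  have := coeff_bdd_of_roots_le Complex.ofRealHom M.charpoly_monic (IsAlgClosed.splits _)
    (by rw [Matrix.charpoly_natDegree_eq_dim, Fintype.card_fin]) hroots i
  simpa [coeff_map] using this

lemma charpoly_line_eq_of_eventually_schur {M₀ N : Matrix (Fin n) (Fin n) ℝ}
    (h : ∀ᶠ t : ℝ in cofinite, Schur (M₀ + t • N)) (s : ℝ) :
    (M₀ + s • N).charpoly = M₀.charpoly := by
  have hcoeff : ∀ (t : ℝ) (i : ℕ),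
      (M₀ + t • N).charpoly.coeff i = ((linePoly M₀ N).charpoly.coeff i).eval t := by
    intro t i
    rw [← map_eval_linePoly, Matrix.charpoly_map, coeff_map, coe_evalRingHom]
  ext i
  have hdeg : ((linePoly M₀ N).charpoly.coeff i).degree ≤ 0 :=
    degree_le_zero_of_eventually_abs_le <| h.mono fun t ht => by
      rw [← hcoeff]; exact ht.abs_coeff_charpoly_le i
  have h0 := hcoeff 0 i
  rw [zero_smul, add_zero] at h0
  rw [hcoeff, h0, eq_C_of_degree_le_zero hdeg, eval_C, eval_C]

lemma schur_line_of_eventually_schur {M₀ N : Matrix (Fin n) (Fin n) ℝ}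
    (h : ∀ᶠ t : ℝ in cofinite, Schur (M₀ + t • N)) (s : ℝ) : Schur (M₀ + s • N) := by
  obtain ⟨t, ht⟩ := h.exists
  exact ht.of_charpoly_eq <| by
    rw [charpoly_line_eq_of_eventually_schur h, charpoly_line_eq_of_eventually_schur h]

end Schur

section Controllability

variable {n m : ℕ}

lemma controllable_iff_det_gramian_ne_zero (A : Matrix (Fin n) (Fin n) ℝ)
    (B : Matrix (Fin n) (Fin m) ℝ) :
    Controllable A B ↔ (reachMat A B * (reachMat A B)ᵀ).det ≠ 0 := by
  rw [Controllable, ← Matrix.rank_self_mul_transpose, ← Matrix.rank_eq_card_iff_det_ne_zero,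
    Fintype.card_fin]

noncomputable def reachMatPoly {p : Type*} (P : Matrix (Fin n) (Fin n) ℝ[X])
    (Q : Matrix (Fin n) p ℝ[X]) :
    Matrix (Fin n) (Fin n × p) ℝ[X] :=
  Matrix.of fun i q => (P ^ (q.1 : ℕ) * Q) i q.2

lemma map_eval_reachMatPoly {p : Type*} [Fintype p] (P : Matrix (Fin n) (Fin n) ℝ[X])
    (Q : Matrix (Fin n) p ℝ[X]) (t : ℝ) :
    (reachMatPoly P Q).map (evalRingHom t) =
      reachMat (P.map (evalRingHom t)) (Q.map (evalRingHom t)) := by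
  ext i q
  simp only [reachMatPoly, reachMat, Matrix.map_apply, Matrix.of_apply]
  rw [← Matrix.map_apply (f := evalRingHom t), Matrix.map_mul,
    ← RingHom.mapMatrix_apply, map_pow, RingHom.mapMatrix_apply]

lemma Controllable.eventually_cofinite_line {A : Matrix (Fin n) (Fin n) ℝ}
    {B : Matrix (Fin n) (Fin m) ℝ} (h : Controllable A B) (ΔA : Matrix (Fin n) (Fin n) ℝ)
    (ΔB : Matrix (Fin n) (Fin m) ℝ) :
    ∀ᶠ t : ℝ in cofinite, Controllable (A + t • ΔA) (B + t • ΔB) := by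
  set R := reachMatPoly (linePoly A ΔA) (linePoly B ΔB)
  have heval : ∀ t : ℝ, (R * Rᵀ).det.eval t =
      (reachMat (A + t • ΔA) (B + t • ΔB) * (reachMat (A + t • ΔA) (B + t • ΔB))ᵀ).det := by
    intro t
    rw [← coe_evalRingHom, RingHom.map_det, RingHom.mapMatrix_apply, Matrix.map_mul,
      Matrix.transpose_map, map_eval_reachMatPoly, map_eval_linePoly, map_eval_linePoly]
  have hne : (R * Rᵀ).det ≠ 0 := fun h0 => by
    have := heval 0
    rw [h0, eval_zero, zero_smul, zero_smul, add_zero, add_zero] at this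
    exact (controllable_iff_det_gramian_ne_zero A B).mp h this.symm
  refine eventually_cofinite.mpr <| (finite_setOfPred_isRoot hne).subset fun t ht => ?_
  rw [Set.mem_ofPred_eq, controllable_iff_det_gramian_ne_zero, not_not, ← heval] at ht
  exact ht

end Controllability

section Data

variable {n m T : ℕ} {u : Fin T → Fin m → ℝ} {x : Fin (T + 1) → Fin n → ℝ}

lemma Consistent.line {A₀ A₁ : Matrix (Fin n) (Fin n) ℝ} {B₀ B₁ : Matrix (Fin n) (Fin m) ℝ}
    (h₀ : Consistent A₀ B₀ u x) (h₁ : Consistent A₁ B₁ u x) (t : ℝ) :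
    Consistent (A₀ + t • (A₁ - A₀)) (B₀ + t • (B₁ - B₀)) u x := by
  intro τ
  have key := congrArg₂ (fun v w => v + t • (w - v)) (h₀ τ) (h₁ τ)
  simp only [sub_self, smul_zero, add_zero] at key
  rw [key, Matrix.add_mulVec, Matrix.add_mulVec, Matrix.smul_mulVec, Matrix.smul_mulVec,
    Matrix.sub_mulVec, Matrix.sub_mulVec]
  module

lemma InfStab.mono {P Q : Set (Sys n m)} (hPQ : P ⊆ Q) (h : InfStab Q u x) : InfStab P u x :=
  let ⟨K, hK⟩ := h
  ⟨K, fun AB hAB => hK AB ⟨hAB.1, hPQ hAB.2⟩⟩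

end Data

theorem stmt_10_general {n m T : ℕ}
    (Atrue : Matrix (Fin n) (Fin n) ℝ) (Btrue : Matrix (Fin n) (Fin m) ℝ)
    (hcont : Controllable Atrue Btrue)
    (u : Fin T → Fin m → ℝ) (x : Fin (T + 1) → Fin n → ℝ)
    (hcons : Consistent Atrue Btrue u x) :
    InfStab (SigmaCont n m) u x ↔ InfStab Set.univ u x := by
  refine ⟨fun ⟨K, hK⟩ => ⟨K, ?_⟩, InfStab.mono (Set.subset_univ _)⟩
  rintro ⟨A, B⟩ ⟨hD, -⟩
  have closedLoop : ∀ t : ℝ, (Atrue + t • (A - Atrue)) + (Btrue + t • (B - Btrue)) * K =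
      (Atrue + Btrue * K) + t • ((A - Atrue) + (B - Btrue) * K) := fun t => by
    simp only [Matrix.add_mul, Matrix.smul_mul, smul_add]
    abel
  have hline : ∀ᶠ t : ℝ in cofinite,
      Schur ((Atrue + Btrue * K) + t • ((A - Atrue) + (B - Btrue) * K)) := by
    filter_upwards [hcont.eventually_cofinite_line (A - Atrue) (B - Btrue)] with t ht
    rw [← closedLoop]
    exact hK (Atrue + t • (A - Atrue), Btrue + t • (B - Btrue)) ⟨hcons.line hD t, ht⟩
  have h1 := schur_line_of_eventually_schur hline 1
  rwa [← closedLoop, one_smul, one_smul, add_sub_cancel, add_sub_cancel] at h1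

/-- If the true system is controllable, then the data is
`Σ_cont`-informative for stabilization iff it is `M`-informative for stabilization. -/
theorem stmt_10 {n m T : ℕ} (hn : 0 < n) (hm : 0 < m)
    (Atrue : Matrix (Fin n) (Fin n) ℝ) (Btrue : Matrix (Fin n) (Fin m) ℝ)
    (hcont : Controllable Atrue Btrue)
    (u : Fin T → Fin m → ℝ) (x : Fin (T + 1) → Fin n → ℝ)
    (hcons : Consistent Atrue Btrue u x) :
    InfStab (SigmaCont n m) u x ↔ InfStab Set.univ u x :=
  stmt_10_general Atrue Btrue hcont u x hcons
end

section
/- Let Σ_pk ⊆ ℝ^{n×n}×ℝ^{n×m}. There exist T ∈ ℕ and an input sequence u(0),…,u(T−1) ∈ ℝ^m that is Σ_pk-universal for stabilization if and only if Σ_pk ⊆ Σ_stab. -/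
/-!
(⇒) Run a stabilizable candidate `(A, B)` from `x(0) = 0`: a gain that works for all systems
consistent with these data works in particular for `(A, B)`.

(⇐) Use `m + 1` blocks of `n + 1` steps, block `j` applying zero input `n` times followed by the
impulse `e_j` (the last block has no impulse). If `(A, B)` and `(A', B')` both explain the data,
the zero steps force `A' = A` on the Krylov space `W` spanned by the `A ^ k v_j`, `v_j` the state
at the start of block `j`; `W` is `A`-invariant by Cayley–Hamilton. The impulses then give
`B' = B` and `im B ⊆ W`. With `K`, `K'` stabilizing `(A, B)`, `(A', B)`, the subspace `W` is
invariant under `A' + BK'`, the maps `A' + BK` and `A + BK` agree on `W`, and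
`(A' + BK) - (A' + BK')` maps into `W`; hence `σ(A' + BK) ⊆ σ(A + BK) ∪ σ(A' + BK')`.
-/

open Matrix

namespace Module.End

variable {K V : Type*} [Field K] [AddCommGroup V] [Module K V] [FiniteDimensional K V]

/- If `g v = μ v` with `μ ∉ σ(h)`, then `(μ - h) v = (g - h) v ∈ W`, and `μ - h` is bijective
on the `h`-invariant subspace `W`, so `v ∈ W`, where `g = f`. -/
theorem spectrum_subset_union_of_eqOn (W : Submodule K V) {f g h : End K V}
    (hgf : ∀ w ∈ W, g w = f w) (hW : ∀ w ∈ W, h w ∈ W) (hgh : ∀ v, g v - h v ∈ W) :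
    spectrum K g ⊆ spectrum K f ∪ spectrum K h := by
  intro μ hμ
  by_contra hnot
  obtain ⟨hf, hh⟩ := not_or.1 hnot
  obtain ⟨v, hv⟩ := (hasEigenvalue_iff_mem_spectrum.2 hμ).exists_hasEigenvector
  have hgv : g v = μ • v := hv.apply_eq_smul
  set φ : End K V := algebraMap K (End K V) μ - h
  have hφ : Function.Injective φ := ((isUnit_iff _).1 (spectrum.notMem_iff.1 hh)).1
  have hφW : ∀ w ∈ W, φ w ∈ W := fun w hw =>
    W.sub_mem (W.smul_mem μ hw) (hW w hw)
  have hφv : φ v ∈ W := by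
    simpa [φ, algebraMap_end_apply, ← hgv] using hgh v
  have hφWinj : Function.Injective (φ.restrict hφW) := fun a b hab =>
    Subtype.ext (hφ (by simpa using congrArg Subtype.val hab))
  obtain ⟨w, hw⟩ := LinearMap.injective_iff_surjective.1 hφWinj ⟨φ v, hφv⟩
  have hvW : v ∈ W := by
    have hwv : (w : V) = v := hφ (by simpa using congrArg Subtype.val hw)
    exact hwv ▸ w.2
  exact hf (hasEigenvalue_iff_mem_spectrum.1
    (hasEigenvalue_of_hasEigenvector ⟨mem_eigenspace_iff.2 (hgf v hvW ▸ hgv), hv.2⟩))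

end Module.End

namespace Matrix

theorem spectrum_subset_union_of_mul_eq {K ι p : Type*} [Field K] [Fintype ι] [DecidableEq ι]
    [Fintype p] {F G H : Matrix ι ι K} (C : Matrix ι p K) (hGF : G * C = F * C)
    (hH : ∃ E : Matrix p p K, H * C = C * E) (hGH : ∃ D : Matrix p ι K, G - H = C * D) :
    spectrum K G ⊆ spectrum K F ∪ spectrum K H := by
  obtain ⟨E, hE⟩ := hH
  obtain ⟨D, hD⟩ := hGH
  simp only [← spectrum_toLin']
  refine Module.End.spectrum_subset_union_of_eqOn (LinearMap.range C.mulVecLin) ?_ ?_ ?_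
  · rintro _ ⟨y, rfl⟩
    simp [mulVec_mulVec, hGF]
  · rintro _ ⟨y, rfl⟩
    exact ⟨E *ᵥ y, by simp [mulVec_mulVec, hE]⟩
  · intro v
    exact ⟨D *ᵥ v, by rw [Matrix.mulVecLin_apply, mulVec_mulVec, ← hD, sub_mulVec]; rfl⟩

end Matrix

theorem Schur.of_mul_eq {n m : ℕ} {p : Type*} [Fintype p]
    {A A' : Matrix (Fin n) (Fin n) ℝ} {B : Matrix (Fin n) (Fin m) ℝ}
    {K K' : Matrix (Fin m) (Fin n) ℝ} (G : Matrix (Fin n) p ℝ)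
    (hAG : ∃ X : Matrix p p ℝ, A * G = G * X) (hA'G : A' * G = A * G)
    (hB : ∃ Y : Matrix p (Fin m) ℝ, B = G * Y)
    (hK : Schur (A + B * K)) (hK' : Schur (A' + B * K')) : Schur (A' + B * K) := by
  obtain ⟨X, hX⟩ := hAG
  obtain ⟨Y, rfl⟩ := hB
  let c : ℝ →+* ℂ := Complex.ofRealHom
  have hGF : (A' + G * Y * K) * G = (A + G * Y * K) * G := by
    rw [Matrix.add_mul, Matrix.add_mul, hA'G]
  have hH : (A' + G * Y * K') * G = G * (X + Y * K' * G) := by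
    rw [Matrix.add_mul, hA'G, hX, Matrix.mul_add, Matrix.mul_assoc, Matrix.mul_assoc,
      Matrix.mul_assoc]
  have hGH : (A' + G * Y * K) - (A' + G * Y * K') = G * (Y * (K - K')) := by
    simp only [add_sub_add_left_eq_sub, Matrix.mul_sub, Matrix.mul_assoc]
  intro μ hμ
  change μ ∈ spectrum ℂ ((A' + G * Y * K).map c) at hμ
  rcases Matrix.spectrum_subset_union_of_mul_eq (F := (A + G * Y * K).map c)
      (H := (A' + G * Y * K').map c) (G.map c)
      (by rw [← Matrix.map_mul, ← Matrix.map_mul, hGF])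
      ⟨(X + Y * K' * G).map c, by rw [← Matrix.map_mul, ← Matrix.map_mul, hH]⟩
      ⟨(Y * (K - K')).map c, by rw [← Matrix.map_mul, ← hGH, Matrix.map_sub _ (map_sub c)]⟩
      hμ with h | h
  · exact hK μ h
  · exact hK' μ h

section ColumnSpan

variable {ι p q : Type*} [Fintype p]

theorem col_mem_colSpan (G : Matrix ι p ℝ) (j : p) : G.col j ∈ colSpan G := by
  classical
  exact ⟨Pi.single j 1, mulVec_single_one G j⟩

theorem exists_eq_mul_of_col_mem_colSpan {G : Matrix ι p ℝ} {M : Matrix ι q ℝ}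
    (h : ∀ j, M.col j ∈ colSpan G) : ∃ X : Matrix p q ℝ, M = G * X := by
  choose y hy using h
  refine ⟨of fun i j => y j i, ?_⟩
  ext i j
  exact (congrFun (hy j) i).symm

theorem mulVec_eq_of_mem_colSpan [Fintype ι] {A A' : Matrix ι ι ℝ} {G : Matrix ι p ℝ}
    (hA : A' * G = A * G) {w : ι → ℝ} (hw : w ∈ colSpan G) : A' *ᵥ w = A *ᵥ w := by
  obtain ⟨y, rfl⟩ := hw
  simp only [mulVecLin_apply, mulVec_mulVec, hA]

end ColumnSpan

section Reachability

variable {n : ℕ} {p : Type*}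

theorem reachMat_col (A : Matrix (Fin n) (Fin n) ℝ) (C : Matrix (Fin n) p ℝ) (i : Fin n)
    (j : p) : (reachMat A C).col (i, j) = A ^ (i : ℕ) *ᵥ C.col j :=
  rfl

/- Cayley–Hamilton: `A ^ k` is a polynomial in `A` of degree `< n`. -/
theorem pow_mulVec_col_mem_Rspace [Fintype p] (A : Matrix (Fin n) (Fin n) ℝ)
    (C : Matrix (Fin n) p ℝ) (k : ℕ) (j : p) : A ^ k *ᵥ C.col j ∈ Rspace A C := by
  rcases Nat.eq_zero_or_pos n with rfl | hn
  · rw [Subsingleton.elim (A ^ k *ᵥ C.col j) 0]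
    exact zero_mem _
  have hχ : A.charpoly.natDegree = n := by
    rw [charpoly_natDegree_eq_dim, Fintype.card_fin]
  have hdeg : (Polynomial.X ^ k %ₘ A.charpoly).natDegree < n := by
    have hne : A.charpoly ≠ 1 := fun h => by
      rw [h, Polynomial.natDegree_one] at hχ
      omega
    simpa [hχ] using Polynomial.natDegree_modByMonic_lt (Polynomial.X ^ k) A.charpoly_monic hne
  have hA : A ^ k = ∑ i ∈ Finset.range n, (Polynomial.X ^ k %ₘ A.charpoly).coeff i • A ^ i := by
    rw [← Polynomial.aeval_eq_sum_range' hdeg,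
      Polynomial.aeval_modByMonic_eq_self_of_root (aeval_self_charpoly A), map_pow,
      Polynomial.aeval_X]
  rw [hA, sum_mulVec]
  refine Submodule.sum_mem _ fun i hi => ?_
  rw [smul_mulVec]
  refine Submodule.smul_mem _ _ ?_
  rw [← reachMat_col A C ⟨i, Finset.mem_range.1 hi⟩ j]
  exact col_mem_colSpan _ _

theorem exists_mul_reachMat_eq [Fintype p] (A : Matrix (Fin n) (Fin n) ℝ)
    (C : Matrix (Fin n) p ℝ) :
    ∃ X, A * reachMat A C = reachMat A C * X := by
  refine exists_eq_mul_of_col_mem_colSpan fun ⟨i, j⟩ => ?_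
  change A *ᵥ (A ^ (i : ℕ) *ᵥ C.col j) ∈ Rspace A C
  rw [mulVec_mulVec, ← pow_succ']
  exact pow_mulVec_col_mem_Rspace A C _ j

end Reachability

section Consistent

variable {n m T : ℕ} {A A' : Matrix (Fin n) (Fin n) ℝ} {B B' : Matrix (Fin n) (Fin m) ℝ}
  {u : Fin T → Fin m → ℝ} {x : Fin (T + 1) → Fin n → ℝ}

theorem exists_consistent (A : Matrix (Fin n) (Fin n) ℝ) (B : Matrix (Fin n) (Fin m) ℝ)
    (u : Fin T → Fin m → ℝ) : ∃ x, Consistent A B u x :=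
  ⟨Fin.induction 0 fun t xt => A *ᵥ xt + B *ᵥ u t, fun t => Fin.induction_succ _ _ t⟩

theorem Consistent.eq_pow_mulVec (hx : Consistent A B u x) {s k : ℕ} (hsk : s + k ≤ T)
    (hu : ∀ t : Fin T, s ≤ t → (t : ℕ) < s + k → u t = 0) :
    x ⟨s + k, by omega⟩ = A ^ k *ᵥ x ⟨s, by omega⟩ := by
  induction k with
  | zero => simp
  | succ k ih =>
    have hstep := hx ⟨s + k, by omega⟩
    rw [hu _ (by simp) (by simp), mulVec_zero, add_zero] at hstep
    rw [pow_succ', ← mulVec_mulVec, ← ih (by omega) fun t h₁ h₂ => hu t h₁ (by omega)]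
    exact hstep

theorem Consistent.mulVec_eq (hx : Consistent A B u x) (hx' : Consistent A' B' u x)
    (t : Fin T) : A' *ᵥ x t.castSucc + B' *ᵥ u t = A *ᵥ x t.castSucc + B *ᵥ u t :=
  (hx' t).symm.trans (hx t)

end Consistent

section ImpulseInput

variable {n m : ℕ}

def impulseInput (n m : ℕ) : Fin (m * (n + 1) + n) → Fin m → ℝ :=
  fun t j => if (t : ℕ) = j * (n + 1) + n then 1 else 0

theorem impulseInput_eq_zero {t : Fin (m * (n + 1) + n)} {j : ℕ} (h₁ : j * (n + 1) ≤ t)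
    (h₂ : (t : ℕ) < j * (n + 1) + n) : impulseInput n m t = 0 := by
  funext i
  refine if_neg fun h => ?_
  rcases lt_or_ge (i : ℕ) j with hij | hij <;> nlinarith

theorem impulse_time_lt (j : Fin m) : j * (n + 1) + n < m * (n + 1) + n := by
  have := Nat.mul_le_mul_right (n + 1) j.isLt
  rw [Nat.succ_mul] at this
  omega

theorem impulseInput_impulse (j : Fin m) :
    impulseInput n m ⟨j * (n + 1) + n, impulse_time_lt j⟩ = Pi.single j 1 := by
  funext i
  simp [impulseInput, Pi.single_apply, Fin.ext_iff, eq_comm]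

end ImpulseInput

section ImpulseData

variable {n m : ℕ} {A A' : Matrix (Fin n) (Fin n) ℝ} {B B' : Matrix (Fin n) (Fin m) ℝ}
  {x : Fin (m * (n + 1) + n + 1) → Fin n → ℝ}

theorem block_time_lt (j : Fin (m + 1)) {k : ℕ} (hk : k ≤ n) :
    j * (n + 1) + k < m * (n + 1) + n + 1 := by
  have := Nat.mul_le_mul_right (n + 1) (Nat.lt_succ_iff.1 j.isLt)
  omega

def blockStates (x : Fin (m * (n + 1) + n + 1) → Fin n → ℝ) :
    Matrix (Fin n) (Fin (m + 1)) ℝ :=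
  of fun r j => x ⟨j * (n + 1), block_time_lt j (Nat.zero_le n)⟩ r

theorem Consistent.eq_pow_mulVec_blockStates (hx : Consistent A B (impulseInput n m) x)
    (j : Fin (m + 1)) {k : ℕ} (hk : k ≤ n) :
    x ⟨j * (n + 1) + k, block_time_lt j hk⟩ = A ^ k *ᵥ (blockStates x).col j :=
  hx.eq_pow_mulVec (by have := block_time_lt j hk; omega) fun _ h₁ h₂ =>
    impulseInput_eq_zero h₁ (by omega)

theorem Consistent.mul_reachMat_blockStates (hx : Consistent A B (impulseInput n m) x)
    (hx' : Consistent A' B' (impulseInput n m) x) :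
    A' * reachMat A (blockStates x) = A * reachMat A (blockStates x) := by
  ext r ⟨i, j⟩
  change (A' *ᵥ (reachMat A _).col (i, j)) r = (A *ᵥ (reachMat A _).col (i, j)) r
  have ht : j * (n + 1) + i < m * (n + 1) + n := by
    have := block_time_lt j i.isLt
    omega
  have h := hx.mulVec_eq hx' ⟨_, ht⟩
  have hu : impulseInput n m ⟨_, ht⟩ = 0 :=
    impulseInput_eq_zero (j := j) (Nat.le_add_right _ _) (by simp)
  rw [hu, mulVec_zero, mulVec_zero, add_zero, add_zero] at h
  rw [reachMat_col, ← hx.eq_pow_mulVec_blockStates j i.isLt.le]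
  exact congrFun h r

theorem Consistent.blockStates_succ (hx : Consistent A B (impulseInput n m) x) (j : Fin m) :
    (blockStates x).col j.succ = A ^ (n + 1) *ᵥ (blockStates x).col j.castSucc + B.col j := by
  have h := hx ⟨_, impulse_time_lt j⟩
  rw [impulseInput_impulse, mulVec_single_one] at h
  have hidx : (⟨(j.succ : ℕ) * (n + 1), block_time_lt j.succ (Nat.zero_le n)⟩ :
      Fin (m * (n + 1) + n + 1)) = Fin.succ ⟨_, impulse_time_lt j⟩ :=
    Fin.ext (by simp only [Fin.val_succ]; ring)
  change x _ = _
  rw [hidx, h, pow_succ', ← mulVec_mulVec]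
  congr 2
  exact hx.eq_pow_mulVec_blockStates j.castSucc le_rfl

theorem Consistent.col_mem_Rspace_blockStates (hx : Consistent A B (impulseInput n m) x)
    (j : Fin m) : B.col j ∈ Rspace A (blockStates x) := by
  rw [eq_sub_of_add_eq' (hx.blockStates_succ j).symm]
  refine Submodule.sub_mem _ ?_ (pow_mulVec_col_mem_Rspace _ _ _ _)
  simpa using pow_mulVec_col_mem_Rspace A (blockStates x) 0 j.succ

theorem Consistent.eq_of_impulseInput (hx : Consistent A B (impulseInput n m) x)
    (hx' : Consistent A' B' (impulseInput n m) x) : B' = B := by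
  ext r j
  have h := hx.mulVec_eq hx' ⟨_, impulse_time_lt j⟩
  rw [impulseInput_impulse, mulVec_single_one, mulVec_single_one] at h
  have hmem : x (Fin.castSucc ⟨_, impulse_time_lt j⟩) ∈ Rspace A (blockStates x) :=
    (hx.eq_pow_mulVec_blockStates j.castSucc le_rfl).symm ▸
      pow_mulVec_col_mem_Rspace _ _ _ _
  rw [mulVec_eq_of_mem_colSpan (hx.mul_reachMat_blockStates hx') hmem] at h
  exact congrFun (add_left_cancel h) r

end ImpulseData

theorem stmt_16_general {n m : ℕ}
    (P : Set (Sys n m)) :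
    (∃ (T : ℕ) (u : Fin T → Fin m → ℝ), UnivStab P u) ↔ P ⊆ SigmaStab n m := by
  constructor
  · rintro ⟨T, u, hu⟩ ⟨A, B⟩ hAB
    obtain ⟨x, hx⟩ := exists_consistent A B u
    obtain ⟨K, hK⟩ := hu _ hAB x hx
    exact ⟨K, hK _ ⟨hx, hAB⟩⟩
  · intro hP
    refine ⟨_, impulseInput n m, ?_⟩
    rintro ⟨A, B⟩ hAB x hx
    obtain ⟨K, hK⟩ := hP hAB
    refine ⟨K, ?_⟩
    rintro ⟨A', B'⟩ ⟨hx', hAB'⟩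
    obtain ⟨K', hK'⟩ := hP hAB'
    obtain rfl := hx.eq_of_impulseInput hx'
    exact Schur.of_mul_eq _ (exists_mul_reachMat_eq A _) (hx.mul_reachMat_blockStates hx')
      (exists_eq_mul_of_col_mem_colSpan hx.col_mem_Rspace_blockStates) hK hK'

/-- There exists a `Σ_pk`-universal input for stabilization
(of some length `T`) iff `Σ_pk ⊆ Σ_stab`. -/
theorem stmt_16 {n m : ℕ} (hn : 0 < n) (hm : 0 < m)
    (P : Set (Sys n m)) :
    (∃ (T : ℕ) (u : Fin T → Fin m → ℝ), UnivStab P u) ↔ P ⊆ SigmaStab n m :=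
  stmt_16_general P
end
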